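/- arXiv:2105.02014 — 7 statements merged into one kernel-verified Lean document; each statement's English description precedes it below -/
import Mathlib

section
/- Let A, B, C ∈ ℝ² be affinely independent and let H be the orthocenter of triangle ABC. Then the following nine points lie on one common circle: the midpoints (A+B)/2, (B+C)/2, (C+A)/2 of the sides; the feet of the three altitudes, i.e. the orthogonal projections of A onto line BC, of B onto line CA, and of C onto line AB; and the midpoints (A+H)/2, (B+H)/2, (C+H)/2 of the segments joining the vertices to the orthocenter. -/
open scoped RealInnerProductSpace

section Aux

variable {E : Type*} [NormedAddCommGroup E] [InnerProductSpace ℝ E]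

/-- If the inner product of `x` and `y` is zero then `‖x + y‖ = ‖x - y‖`. -/
lemma aux_norm_add_eq_norm_sub {x y : E} (h : ⟪x, y⟫ = 0) : ‖x + y‖ = ‖x - y‖ := by
  apply (real_inner_add_sub_eq_zero_iff (x + y) (x - y)).mp
  have h1 : x + y + (x - y) = (2 : ℝ) • x := by module
  have h2 : x + y - (x - y) = (2 : ℝ) • y := by module
  rw [h1, h2, real_inner_smul_left, real_inner_smul_right, h]
  ring

/-- Thales: a point seeing `m₁ m₂` at a right angle lies on the circle with
diameter `m₁ m₂`. -/
lemma aux_thales {m₁ m₂ P : E} (h : ⟪P - m₁, P - m₂⟫ = 0) :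
    dist (midpoint ℝ m₁ m₂) P = dist (midpoint ℝ m₁ m₂) m₁ := by
  have e1 : midpoint ℝ m₁ m₂ - P = (-(2⁻¹ : ℝ)) • ((P - m₁) + (P - m₂)) := by
    rw [midpoint_eq_smul_add, invOf_eq_inv]; module
  have e2 : midpoint ℝ m₁ m₂ - m₁ = ((2⁻¹ : ℝ)) • ((P - m₁) - (P - m₂)) := by
    rw [midpoint_eq_smul_add, invOf_eq_inv]; module
  rw [dist_eq_norm, dist_eq_norm, e1, e2, norm_smul, norm_smul,
    aux_norm_add_eq_norm_sub h, norm_neg]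

end Aux

/-- **The nine-point circle.** For a triangle `A B C` with orthocenter `H` (the common point
of the three altitudes) and altitude feet `FA, FB, FC`, the three side midpoints, the three
altitude feet and the three midpoints of the segments from the vertices to the orthocenter
all lie on one common circle. -/
theorem nine_point_circle
    (A B C H FA FB FC : EuclideanSpace ℝ (Fin 2))
    (hABC : AffineIndependent ℝ ![A, B, C])
    -- `H` lies on the altitude through `A` (perpendicular to `BC`), etc.
    (hH1 : ⟪H - A, C - B⟫ = 0)
    (hH2 : ⟪H - B, A - C⟫ = 0)
    (hH3 : ⟪H - C, B - A⟫ = 0)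
    -- `FA` is the orthogonal projection of `A` onto line `BC`, etc.
    (hFA1 : FA ∈ line[ℝ, B, C]) (hFA2 : ⟪A - FA, C - B⟫ = 0)
    (hFB1 : FB ∈ line[ℝ, C, A]) (hFB2 : ⟪B - FB, A - C⟫ = 0)
    (hFC1 : FC ∈ line[ℝ, A, B]) (hFC2 : ⟪C - FC, B - A⟫ = 0) :
    ∃ (N : EuclideanSpace ℝ (Fin 2)) (ρ : ℝ), 0 < ρ ∧
      dist N (midpoint ℝ A B) = ρ ∧
      dist N (midpoint ℝ B C) = ρ ∧
      dist N (midpoint ℝ C A) = ρ ∧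
      dist N FA = ρ ∧
      dist N FB = ρ ∧
      dist N FC = ρ ∧
      dist N (midpoint ℝ A H) = ρ ∧
      dist N (midpoint ℝ B H) = ρ ∧
      dist N (midpoint ℝ C H) = ρ := by
  set N : EuclideanSpace ℝ (Fin 2) := midpoint ℝ (midpoint ℝ B C) (midpoint ℝ A H) with hN
  -- the three descriptions of the nine-point center
  have hN2 : N = midpoint ℝ (midpoint ℝ C A) (midpoint ℝ B H) := by
    simp only [hN, midpoint_eq_smul_add, invOf_eq_inv, smul_add]; module
  have hN3 : N = midpoint ℝ (midpoint ℝ A B) (midpoint ℝ C H) := by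
    simp only [hN, midpoint_eq_smul_add, invOf_eq_inv, smul_add]; module
  -- distances from N to the two endpoints of each diameter agree
  have dmid : ∀ x y : EuclideanSpace ℝ (Fin 2),
      dist (midpoint ℝ x y) x = dist (midpoint ℝ x y) y := by
    intro x y
    rw [dist_midpoint_left, dist_midpoint_right, dist_comm]
  -- the three diameters have the same length
  have hlen1 : dist (midpoint ℝ B C) (midpoint ℝ A H)
      = dist (midpoint ℝ C A) (midpoint ℝ B H) := by
    have e1 : midpoint ℝ B C - midpoint ℝ A H
        = (4⁻¹ : ℝ) • (((B + C - A - H) + (C + A - B - H))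
          + ((B + C - A - H) - (C + A - B - H))) := by
      simp only [midpoint_eq_smul_add, invOf_eq_inv]; module
    have e2 : midpoint ℝ C A - midpoint ℝ B H
        = (4⁻¹ : ℝ) • (((B + C - A - H) + (C + A - B - H))
          - ((B + C - A - H) - (C + A - B - H))) := by
      simp only [midpoint_eq_smul_add, invOf_eq_inv]; module
    rw [dist_eq_norm, dist_eq_norm, e1, e2, norm_smul, norm_smul]
    congr 1
    apply aux_norm_add_eq_norm_sub
    have f1 : B + C - A - H + (C + A - B - H) = (2 : ℝ) • (C - H) := by module
    have f2 : B + C - A - H - (C + A - B - H) = (2 : ℝ) • (B - A) := by module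
    rw [f1, f2, real_inner_smul_left, real_inner_smul_right]
    have : ⟪C - H, B - A⟫ = 0 := by
      have : C - H = -(H - C) := by abel
      rw [this, inner_neg_left, hH3, neg_zero]
    rw [this]; ring
  have hlen2 : dist (midpoint ℝ C A) (midpoint ℝ B H)
      = dist (midpoint ℝ A B) (midpoint ℝ C H) := by
    have e1 : midpoint ℝ C A - midpoint ℝ B H
        = (4⁻¹ : ℝ) • (((C + A - B - H) + (A + B - C - H))
          + ((C + A - B - H) - (A + B - C - H))) := by
      simp only [midpoint_eq_smul_add, invOf_eq_inv]; module
    have e2 : midpoint ℝ A B - midpoint ℝ C H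
        = (4⁻¹ : ℝ) • (((C + A - B - H) + (A + B - C - H))
          - ((C + A - B - H) - (A + B - C - H))) := by
      simp only [midpoint_eq_smul_add, invOf_eq_inv]; module
    rw [dist_eq_norm, dist_eq_norm, e1, e2, norm_smul, norm_smul]
    congr 1
    apply aux_norm_add_eq_norm_sub
    have f1 : C + A - B - H + (A + B - C - H) = (2 : ℝ) • (A - H) := by module
    have f2 : C + A - B - H - (A + B - C - H) = (2 : ℝ) • (C - B) := by module
    rw [f1, f2, real_inner_smul_left, real_inner_smul_right]
    have : ⟪A - H, C - B⟫ = 0 := by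
      have : A - H = -(H - A) := by abel
      rw [this, inner_neg_left, hH1, neg_zero]
    rw [this]; ring
  set ρ : ℝ := dist N (midpoint ℝ B C) with hρ
  -- equalities for the six midpoints
  have dBC : dist N (midpoint ℝ B C) = ρ := rfl
  have dAH : dist N (midpoint ℝ A H) = ρ := by
    rw [hN, ← dmid, ← hN]
  have key : dist N (midpoint ℝ B C)
      = ‖(2 : ℝ)‖⁻¹ * dist (midpoint ℝ B C) (midpoint ℝ A H) := by
    rw [hN, dist_midpoint_left]
  have dCA : dist N (midpoint ℝ C A) = ρ := by
    rw [hN2, dist_midpoint_left, ← hlen1, ← key]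
  have dBH : dist N (midpoint ℝ B H) = ρ := by
    rw [hN2, ← dmid, ← hN2]; exact dCA
  have dAB : dist N (midpoint ℝ A B) = ρ := by
    rw [hN3, dist_midpoint_left, ← hlen2, ← hlen1, ← key]
  have dCH : dist N (midpoint ℝ C H) = ρ := by
    rw [hN3, ← dmid, ← hN3]; exact dAB
  -- positivity
  have hBA : B ≠ A := by
    intro h
    have : ((1 : Fin 3) : Fin 3) = 0 := hABC.injective (by simp [h])
    exact absurd this (by decide)
  have hρpos : 0 < ρ := by
    rw [hρ, hN, dist_midpoint_left]
    have hne : midpoint ℝ B C ≠ midpoint ℝ A H := by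
      intro h
      have h' : B + C = A + H := by
        have := h
        simp only [midpoint_eq_smul_add, invOf_eq_inv] at this
        have h2 := congrArg (fun v => (2 : ℝ) • v) this
        simpa [smul_smul] using h2
      have hHC : H - C = B - A := by
        have : H = B + C - A := by
          have := h'.symm
          linear_combination (norm := module) this
        rw [this]; abel
      have : ⟪B - A, B - A⟫ = (0 : ℝ) := by rw [← hHC] at hH3 ⊢; exact hH3
      exact hBA (sub_eq_zero.mp (by simpa using inner_self_eq_zero.mp this))
    have hd : 0 < dist (midpoint ℝ B C) (midpoint ℝ A H) := dist_pos.mpr hne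
    have h2 : (0 : ℝ) < ‖(2 : ℝ)‖⁻¹ := by norm_num
    exact mul_pos h2 hd
  -- altitude feet via Thales
  have foot : ∀ (P Q R F' : EuclideanSpace ℝ (Fin 2)),
      F' ∈ line[ℝ, Q, R] → ⟪P - F', R - Q⟫ = 0 → ⟪H - P, R - Q⟫ = 0 →
      dist (midpoint ℝ (midpoint ℝ Q R) (midpoint ℝ P H)) F'
        = dist (midpoint ℝ (midpoint ℝ Q R) (midpoint ℝ P H)) (midpoint ℝ Q R) := by
    intro P Q R F' hmem hperp hHperp
    apply aux_thales
    obtain ⟨t, ht⟩ := (vadd_left_mem_affineSpan_pair (k := ℝ) (p₁ := Q) (p₂ := R)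
        (v := F' -ᵥ Q)).mp (by simpa using hmem)
    have ht' : t • (R - Q) = F' - Q := by simpa [vsub_eq_sub] using ht
    have e1 : F' - midpoint ℝ Q R = (t - 2⁻¹ : ℝ) • (R - Q) := by
      have hF' : F' = t • (R - Q) + Q := by rw [ht']; abel
      rw [hF', midpoint_eq_smul_add, invOf_eq_inv]; module
    rw [e1, real_inner_smul_left]
    have e2 : F' - midpoint ℝ P H = (2⁻¹ : ℝ) • ((F' - P) + (F' - H)) := by
      rw [midpoint_eq_smul_add, invOf_eq_inv]; module
    have g1 : ⟪F' - P, R - Q⟫ = 0 := by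
      have : F' - P = -(P - F') := by abel
      rw [this, inner_neg_left, hperp, neg_zero]
    have g2 : ⟪F' - H, R - Q⟫ = 0 := by
      have : F' - H = (F' - P) + -(H - P) := by abel
      rw [this, inner_add_left, inner_neg_left, g1, hHperp, neg_zero, add_zero]
    rw [e2, real_inner_smul_right, real_inner_comm, inner_add_left, g1, g2]
    ring
  have dFA : dist N FA = ρ := by
    rw [hρ, hN]
    exact foot A B C FA hFA1 hFA2 hH1
  have dFB : dist N FB = ρ := by
    rw [← dCA, hN2]
    exact foot B C A FB hFB1 hFB2 hH2
  have dFC : dist N FC = ρ := by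
    rw [← dAB, hN3]
    exact foot C A B FC hFC1 hFC2 hH3
  exact ⟨N, ρ, hρpos, dAB, dBC, dCA, dFA, dFB, dFC, dAH, dBH, dCH⟩
end

section
/- Let A, B, C ∈ ℝ² be affinely independent, let H be the orthocenter of triangle ABC, and assume H ∉ {A, B, C}. Then the four triangles ABC, ABH, AHC, HBC determined by the orthocentric system {A, B, C, H} all have the same nine-point circle: the circumcircle of the medial triangle of ABC coincides (same center and same radius) with the circumcircle of the medial triangle of each of ABH, AHC and HBC. -/
open scoped RealInnerProductSpace

lemma norm_eq_of_inner_sub_add {E : Type*} [NormedAddCommGroup E]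
    [InnerProductSpace ℝ E] {u v : E} (h : ⟪u - v, u + v⟫ = (0 : ℝ)) :
    ‖u‖ = ‖v‖ := by
  have h' : (⟪u, u⟫ : ℝ) = ⟪v, v⟫ := by
    rw [inner_sub_left, inner_add_right, inner_add_right, real_inner_comm u v] at h
    linarith
  have h2 : ‖u‖ ^ 2 = ‖v‖ ^ 2 := by
    rw [← real_inner_self_eq_norm_sq, ← real_inner_self_eq_norm_sq]; exact h'
  nlinarith [norm_nonneg u, norm_nonneg v]

/-- The four triangles `ABC, ABH, AHC, HBC` of an orthocentric system have the same
nine-point circle: there is one circle through the midpoints of all six segments joining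
two of the four points, and hence the circumcircles of the medial triangles of the four
triangles all coincide (same center, same radius). -/
theorem orthocentric_system_common_nine_point_circle
    (A B C H : EuclideanSpace ℝ (Fin 2))
    (hABC : AffineIndependent ℝ ![A, B, C])
    -- `H` is the orthocenter of triangle `ABC`
    (hH1 : ⟪H - A, C - B⟫ = (0 : ℝ))
    (hH2 : ⟪H - B, A - C⟫ = (0 : ℝ))
    (hH3 : ⟪H - C, B - A⟫ = (0 : ℝ))
    (hHA : H ≠ A) (hHB : H ≠ B) (hHC : H ≠ C) :
    ∃ (N : EuclideanSpace ℝ (Fin 2)) (ρ : ℝ), 0 < ρ ∧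
      -- vertices of the medial triangle of `ABC`
      dist N (midpoint ℝ A B) = ρ ∧
      dist N (midpoint ℝ B C) = ρ ∧
      dist N (midpoint ℝ C A) = ρ ∧
      -- the remaining medial-triangle vertices of `ABH`, `AHC` and `HBC`
      dist N (midpoint ℝ A H) = ρ ∧
      dist N (midpoint ℝ B H) = ρ ∧
      dist N (midpoint ℝ C H) = ρ := by
  set N : EuclideanSpace ℝ (Fin 2) := (4 : ℝ)⁻¹ • (A + B + C + H) with hN
  -- distances from N to midpoints are (1/4) * norms of these vectors
  have key : ∀ X Y w : EuclideanSpace ℝ (Fin 2),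
      N - midpoint ℝ X Y = (4 : ℝ)⁻¹ • w →
      dist N (midpoint ℝ X Y) = (4 : ℝ)⁻¹ * ‖w‖ := by
    intro X Y w hw
    rw [dist_eq_norm, hw, norm_smul]
    norm_num
  have d1 : dist N (midpoint ℝ A B) = (4 : ℝ)⁻¹ * ‖C + H - A - B‖ :=
    key A B _ (by rw [hN, midpoint_eq_smul_add, invOf_eq_inv]; module)
  have d2 : dist N (midpoint ℝ B C) = (4 : ℝ)⁻¹ * ‖H + A - B - C‖ :=
    key B C _ (by rw [hN, midpoint_eq_smul_add, invOf_eq_inv]; module)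
  have d3 : dist N (midpoint ℝ C A) = (4 : ℝ)⁻¹ * ‖B + H - C - A‖ :=
    key C A _ (by rw [hN, midpoint_eq_smul_add, invOf_eq_inv]; module)
  have d4 : dist N (midpoint ℝ A H) = (4 : ℝ)⁻¹ * ‖H + A - B - C‖ := by
    rw [key A H (B + C - A - H) (by rw [hN, midpoint_eq_smul_add, invOf_eq_inv]; module)]
    congr 1
    rw [← norm_neg]; congr 1; abel
  have d5 : dist N (midpoint ℝ B H) = (4 : ℝ)⁻¹ * ‖B + H - C - A‖ := by
    rw [key B H (A + C - B - H) (by rw [hN, midpoint_eq_smul_add, invOf_eq_inv]; module)]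
    congr 1
    rw [← norm_neg]; congr 1; abel
  have d6 : dist N (midpoint ℝ C H) = (4 : ℝ)⁻¹ * ‖C + H - A - B‖ := by
    rw [key C H (A + B - C - H) (by rw [hN, midpoint_eq_smul_add, invOf_eq_inv]; module)]
    congr 1
    rw [← norm_neg]; congr 1; abel
  -- the three norms coincide
  have e1 : ‖C + H - A - B‖ = ‖H + A - B - C‖ := by
    apply norm_eq_of_inner_sub_add
    have h1 : (C + H - A - B) - (H + A - B - C) = (2 : ℝ) • (C - A) := by module
    have h2 : (C + H - A - B) + (H + A - B - C) = (2 : ℝ) • (H - B) := by module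
    rw [h1, h2, real_inner_smul_left, real_inner_smul_right, real_inner_comm]
    have : (⟪H - B, C - A⟫ : ℝ) = - ⟪H - B, A - C⟫ := by
      rw [← inner_neg_right]; congr 1; abel
    rw [this, hH2]; ring
  have e2 : ‖C + H - A - B‖ = ‖B + H - C - A‖ := by
    apply norm_eq_of_inner_sub_add
    have h1 : (C + H - A - B) - (B + H - C - A) = (2 : ℝ) • (C - B) := by module
    have h2 : (C + H - A - B) + (B + H - C - A) = (2 : ℝ) • (H - A) := by module
    rw [h1, h2, real_inner_smul_left, real_inner_smul_right, real_inner_comm]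
    rw [hH1]; ring
  -- positivity
  have hpos : 0 < (4 : ℝ)⁻¹ * ‖C + H - A - B‖ := by
    have hne : C + H - A - B ≠ 0 := by
      intro h0
      have hHB' : H - B = A - C := by
        have h' : (H - B) - (A - C) = C + H - A - B := by abel
        rw [h0] at h'
        exact sub_eq_zero.mp h'
      rw [hHB'] at hH2
      have hAC : A = C := by
        have hn2 : ‖A - C‖ ^ 2 = 0 := by
          rw [← real_inner_self_eq_norm_sq]; exact hH2
        have hn : ‖A - C‖ = 0 := by nlinarith [norm_nonneg (A - C)]
        exact sub_eq_zero.mp (norm_eq_zero.mp hn)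
      have : (0 : Fin 3) = 2 := hABC.injective (by simp [hAC])
      simp at this
    have := norm_pos_iff.mpr hne
    positivity
  exact ⟨N, (4 : ℝ)⁻¹ * ‖C + H - A - B‖, hpos, d1, by rw [d2, e1], by rw [d3, e2],
    by rw [d4, e1], by rw [d5, e2], d6⟩
end

section
/- Let A, B, C, D ∈ ℝ² be four points, no three of which are collinear. Assume that the lines AB and CD meet in a point B₁ and that the lines AC and BD meet in a point C₁. Then the midpoint of segment AD, the midpoint of segment BC, and the midpoint of segment B₁C₁ are collinear (they lie on the Gauss line of the complete quadrangle). -/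
lemma linIndep_of_affIndep {V : Type*} [AddCommGroup V] [Module ℝ V]
    (A B C : V) (h : AffineIndependent ℝ ![A, B, C]) :
    LinearIndependent ℝ ![B - A, C - A] := by
  rw [affineIndependent_iff_linearIndependent_vsub ℝ ![A, B, C] 0] at h
  have e : Function.Injective (fun i : Fin 2 => (⟨i.succ, Fin.succ_ne_zero i⟩ :
      {x : Fin 3 // x ≠ 0})) := by
    intro a b hab
    simpa [Fin.succ_inj] using congrArg Subtype.val hab
  have := h.comp _ e
  convert this using 1
  funext i
  fin_cases i <;> simp [vsub_eq_sub]
  rfl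

/-- **The Gauss line of a complete quadrangle.** If no three of `A, B, C, D` are collinear,
`B₁` is the intersection point of lines `AB` and `CD`, and `C₁` is the intersection point of
lines `AC` and `BD`, then the midpoints of `AD`, of `BC` and of `B₁C₁` are collinear. -/
theorem gauss_line
    (A B C D B₁ C₁ : EuclideanSpace ℝ (Fin 2))
    (h1 : AffineIndependent ℝ ![A, B, C])
    (h2 : AffineIndependent ℝ ![A, B, D])
    (h3 : AffineIndependent ℝ ![A, C, D])
    (h4 : AffineIndependent ℝ ![B, C, D])
    (hB₁1 : B₁ ∈ line[ℝ, A, B]) (hB₁2 : B₁ ∈ line[ℝ, C, D])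
    (hC₁1 : C₁ ∈ line[ℝ, A, C]) (hC₁2 : C₁ ∈ line[ℝ, B, D]) :
    Collinear ℝ ({midpoint ℝ A D, midpoint ℝ B C, midpoint ℝ B₁ C₁} :
      Set (EuclideanSpace ℝ (Fin 2))) := by
  -- extract scalar parameters
  rw [← vsub_vadd B₁ A] at hB₁1
  rw [← vsub_vadd B₁ C] at hB₁2
  rw [← vsub_vadd C₁ A] at hC₁1
  rw [← vsub_vadd C₁ B] at hC₁2
  obtain ⟨s, hs⟩ := vadd_left_mem_affineSpan_pair.1 hB₁1
  obtain ⟨t, ht⟩ := vadd_left_mem_affineSpan_pair.1 hB₁2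
  obtain ⟨u, hu⟩ := vadd_left_mem_affineSpan_pair.1 hC₁1
  obtain ⟨v, hv⟩ := vadd_left_mem_affineSpan_pair.1 hC₁2
  simp only [vsub_eq_sub] at hs ht hu hv
  have hlin : LinearIndependent ℝ ![B - A, C - A] := linIndep_of_affIndep A B C h1
  -- D - A is in the span of B - A, C - A
  have hspan : Submodule.span ℝ (Set.range ![B - A, C - A]) = ⊤ :=
    hlin.span_eq_top_of_card_eq_finrank (by simp [finrank_euclideanSpace])
  have hdspan : D - A ∈ Submodule.span ℝ
      ({B - A, C - A} : Set (EuclideanSpace ℝ (Fin 2))) := by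
    have hr : Set.range ![B - A, C - A] = {B - A, C - A} := by
      simp [Matrix.range_cons, Matrix.range_empty, Set.pair_comm]
    rw [← hr, hspan]; trivial
  obtain ⟨β, γ, hβγ⟩ := Submodule.mem_span_pair.1 hdspan
  -- extract the scalar equations
  have key1 : (s - t * β) • (B - A) + ((t - 1) - t * γ) • (C - A) = 0 := by
    linear_combination (norm := module) hs - ht - t • hβγ
  have key2 : ((v - 1) - v * β) • (B - A) + (u - v * γ) • (C - A) = 0 := by
    linear_combination (norm := module) hu - hv - v • hβγ
  obtain ⟨e1, e2⟩ := hlin.eq_zero_of_pair key1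
  obtain ⟨e3, e4⟩ := hlin.eq_zero_of_pair key2
  -- express the points
  have hB₁ : B₁ = s • (B - A) + A := by rw [hs]; abel
  have hC₁ : C₁ = u • (C - A) + A := by rw [hu]; abel
  have hD : D = β • (B - A) + γ • (C - A) + A := by rw [hβγ]; abel
  rw [collinear_iff_exists_forall_eq_smul_vadd]
  refine ⟨midpoint ℝ A D, midpoint ℝ B C -ᵥ midpoint ℝ A D, ?_⟩
  intro p hp
  simp only [Set.mem_insert_iff, Set.mem_singleton_iff] at hp
  rcases hp with rfl | rfl | rfl
  · exact ⟨0, by simp⟩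
  · exact ⟨1, by rw [one_smul, vsub_vadd]⟩
  · refine ⟨β * γ * t * v, ?_⟩
    simp only [midpoint_eq_smul_add, invOf_eq_inv, vsub_eq_sub, vadd_eq_add]
    rw [hB₁, hC₁, hD]
    match_scalars
    · linear_combination (2:ℝ)⁻¹ * e1 + ((2:ℝ)⁻¹*β) * e2 + ((2:ℝ)⁻¹*β*γ*t - β*γ*t) * e3
    · linear_combination (-(2:ℝ)⁻¹) * e1 + (-(2:ℝ)⁻¹*β - (2:ℝ)⁻¹*γ*β*v + γ*β*v) * e2 +
        (-(2:ℝ)⁻¹*β*γ*t - (2:ℝ)⁻¹*γ + β*γ*t) * e3 + (-(2:ℝ)⁻¹) * e4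
    · linear_combination (2:ℝ)⁻¹ * e4 + ((2:ℝ)⁻¹*γ) * e3 + ((2:ℝ)⁻¹*γ*β*v - γ*β*v) * e2
end

section
/- Let A, B, C, D ∈ ℝ² be four points, no three of which are collinear. Assume that the lines AD and BC meet in a point A₁ and that the lines AC and BD meet in a point C₁. Then the midpoint of segment AB, the midpoint of segment CD, and the midpoint of segment A₁C₁ are collinear; that is, the midpoints of two opposite sides of the complete quadrangle are aligned with the midpoint of the segment joining the intersection points of the other two pairs of opposite sides. -/
private lemma coeff_zero_of_not_collinear {V : Type*} [AddCommGroup V] [Module ℝ V]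
    {P Q R : V} (h : ¬ Collinear ℝ ({P, Q, R} : Set V))
    {p q : ℝ} (hpq : p • (Q - P) + q • (R - P) = 0) : p = 0 ∧ q = 0 := by
  have hQP : Q - P ≠ 0 := by
    intro h0
    have hQ : Q = P := by
      have := sub_eq_zero.mp h0; exact this
    apply h
    subst hQ
    have hset : ({Q, Q, R} : Set V) = {Q, R} := Set.insert_idem _ _
    rw [hset]
    exact collinear_pair ℝ Q R
  have hq : q = 0 := by
    by_contra hq
    apply h
    rw [collinear_iff_exists_forall_eq_smul_vadd]
    refine ⟨P, Q - P, ?_⟩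
    intro pt hpt
    rcases hpt with h' | h' | h'
    · exact ⟨0, by simp [h']⟩
    · exact ⟨1, by simp [h']⟩
    · simp only [Set.mem_singleton_iff] at h'
      subst h'
      refine ⟨-(p/q), ?_⟩
      have h2 : q • (pt - P) = (-p) • (Q - P) := by
        linear_combination (norm := module) hpq
      have h3 : pt - P = (-(p/q)) • (Q - P) := by
        calc pt - P = (q⁻¹ * q) • (pt - P) := by rw [inv_mul_cancel₀ hq, one_smul]
        _ = q⁻¹ • (q • (pt - P)) := by rw [mul_smul]
        _ = q⁻¹ • ((-p) • (Q - P)) := by rw [h2]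
        _ = (-(p/q)) • (Q - P) := by rw [smul_smul]; ring_nf
      rw [vadd_eq_add]
      rw [sub_eq_iff_eq_add] at h3
      exact h3
  constructor
  · have hp2 : p • (Q - P) = 0 := by rw [hq] at hpq; simpa using hpq
    rcases smul_eq_zero.mp hp2 with h' | h'
    · exact h'
    · exact absurd h' hQP
  · exact hq

/-- In a complete quadrangle `A B C D` (no three of the points collinear), the midpoints of
two opposite sides `AB` and `CD` are aligned with the midpoint of the segment `A₁C₁` joining
the intersection points of the other two pairs of opposite sides, where `A₁ = AD ∩ BC` and
`C₁ = AC ∩ BD`. -/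
theorem midpoints_aligned_with_diagonal_midpoint
    (A B C D A₁ C₁ : EuclideanSpace ℝ (Fin 2))
    (h1 : AffineIndependent ℝ ![A, B, C])
    (h2 : AffineIndependent ℝ ![A, B, D])
    (h3 : AffineIndependent ℝ ![A, C, D])
    (h4 : AffineIndependent ℝ ![B, C, D])
    (hA₁1 : A₁ ∈ line[ℝ, A, D]) (hA₁2 : A₁ ∈ line[ℝ, B, C])
    (hC₁1 : C₁ ∈ line[ℝ, A, C]) (hC₁2 : C₁ ∈ line[ℝ, B, D]) :
    Collinear ℝ ({midpoint ℝ A B, midpoint ℝ C D, midpoint ℝ A₁ C₁} :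
      Set (EuclideanSpace ℝ (Fin 2))) := by
  -- extract parameters for the four line memberships
  rw [← vsub_vadd A₁ A] at hA₁1
  obtain ⟨s, hs⟩ := vadd_left_mem_affineSpan_pair.mp hA₁1
  rw [← vsub_vadd A₁ B] at hA₁2
  obtain ⟨t, ht⟩ := vadd_left_mem_affineSpan_pair.mp hA₁2
  rw [← vsub_vadd C₁ A] at hC₁1
  obtain ⟨u, hu⟩ := vadd_left_mem_affineSpan_pair.mp hC₁1
  rw [← vsub_vadd C₁ B] at hC₁2
  obtain ⟨v, hv⟩ := vadd_left_mem_affineSpan_pair.mp hC₁2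
  simp only [vsub_eq_sub] at hs ht hu hv
  have hs' : A₁ = s • (D - A) + A := by linear_combination (norm := module) -hs
  have ht' : A₁ = t • (C - B) + B := by linear_combination (norm := module) -ht
  have hu' : C₁ = u • (C - A) + A := by linear_combination (norm := module) -hu
  have hv' : C₁ = v • (D - B) + B := by linear_combination (norm := module) -hv
  -- B - A, C - A form a basis
  have hnc1 : ¬ Collinear ℝ ({A, B, C} : Set (EuclideanSpace ℝ (Fin 2))) :=
    affineIndependent_iff_not_collinear_set.mp h1
  have hli : LinearIndependent ℝ ![B - A, C - A] :=
    LinearIndependent.pair_iff.mpr (fun p q hpq => coeff_zero_of_not_collinear hnc1 hpq)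
  have hsp : Submodule.span ℝ (Set.range ![B - A, C - A]) = ⊤ :=
    hli.span_eq_top_of_card_eq_finrank (by simp)
  have hrange : Set.range ![B - A, C - A] = ({B - A, C - A} : Set (EuclideanSpace ℝ (Fin 2))) := by
    simp [Matrix.range_cons, Matrix.range_empty, Set.pair_comm]
  have hmemD : D - A ∈ Submodule.span ℝ ({B - A, C - A} : Set (EuclideanSpace ℝ (Fin 2))) := by
    rw [← hrange, hsp]; trivial
  obtain ⟨x, y, hd0⟩ := Submodule.mem_span_pair.mp hmemD
  have hd : D - A = x • (B - A) + y • (C - A) := hd0.symm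
  -- coefficient equations
  have key1 : (s*x - 1 + t) • (B - A) + (s*y - t) • (C - A) = 0 := by
    linear_combination (norm := module) (hs'.symm.trans ht') - s • hd
  have key2 : (-1 - v*x + v) • (B - A) + (u - v*y) • (C - A) = 0 := by
    linear_combination (norm := module) (hu'.symm.trans hv') + v • hd
  obtain ⟨e1, e2⟩ := coeff_zero_of_not_collinear hnc1 key1
  obtain ⟨e3, e4⟩ := coeff_zero_of_not_collinear hnc1 key2
  -- the midpoint of A₁C₁ lies on the line through the other midpoints
  have hd' : D = x • (B - A) + y • (C - A) + A := by
    linear_combination (norm := module) hd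
  have hfinal : midpoint ℝ A₁ C₁ =
      (t*v) • (midpoint ℝ C D - midpoint ℝ A B) + midpoint ℝ A B := by
    rw [hs', hu', hd']
    simp only [midpoint_eq_smul_add, invOf_eq_inv]
    match_scalars
    · linear_combination (1/2 : ℝ) * e1 + (t/2) * e3
    · linear_combination ((v*y-1)/2) * e1 - ((1+v*x)/2) * e2 - (1/2 : ℝ) * e4
    · linear_combination (1/2 : ℝ) * e4 + ((1+v*x)/2) * e2 - (v*y/2) * e1 - (t/2) * e3
  have hmem : midpoint ℝ A₁ C₁ ∈ line[ℝ, midpoint ℝ A B, midpoint ℝ C D] := by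
    rw [hfinal]
    simpa [vsub_eq_sub, vadd_eq_add] using
      smul_vsub_vadd_mem_affineSpan_pair (t*v) (midpoint ℝ A B) (midpoint ℝ C D)
  have hcol := collinear_insert_of_mem_affineSpan_pair hmem
  refine hcol.subset ?_
  intro z hz
  simp only [Set.mem_insert_iff, Set.mem_singleton_iff] at hz ⊢
  tauto
end

section
/- Let A, B, C ∈ ℝ² be affinely independent with orthocenter H. Let q(x, y) = a·x² + b·x·y + c·y² + d·x + e·y + f be a nonzero real polynomial of degree at most 2 with a + c = 0 (a rectangular, i.e. equilateral, hyperbola) that vanishes at A, B and C. Then q also vanishes at H; that is, every equilateral hyperbola through the vertices of a triangle passes through its orthocenter. -/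
open scoped RealInnerProductSpace

/-- The value of the degree-≤2 polynomial `a·x² + b·x·y + c·y² + d·x + e·y + f` at a point of
the plane. -/
noncomputable def conicEval (a b c d e f : ℝ) (P : EuclideanSpace ℝ (Fin 2)) : ℝ :=
  a * P 0 ^ 2 + b * P 0 * P 1 + c * P 1 ^ 2 + d * P 0 + e * P 1 + f

private lemma rect_aux (x1 y1 x2 y2 x3 y3 x0 y0 a b d e f : ℝ)
    (hA : a * x1 ^ 2 + b * x1 * y1 - a * y1 ^ 2 + d * x1 + e * y1 + f = 0)
    (hB : a * x2 ^ 2 + b * x2 * y2 - a * y2 ^ 2 + d * x2 + e * y2 + f = 0)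
    (hC : a * x3 ^ 2 + b * x3 * y3 - a * y3 ^ 2 + d * x3 + e * y3 + f = 0)
    (hI1 : (x0 - x1) * (x3 - x2) + (y0 - y1) * (y3 - y2) = 0)
    (hI2 : (x0 - x2) * (x1 - x3) + (y0 - y2) * (y1 - y3) = 0)
    (hD : (x2 - x1) * (y3 - y2) - (y2 - y1) * (x3 - x2) ≠ 0)
    (hdot : (x2 - x1) * (x3 - x2) + (y2 - y1) * (y3 - y2) ≠ 0) :
    a * x0 ^ 2 + b * x0 * y0 - a * y0 ^ 2 + d * x0 + e * y0 + f = 0 := by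
  set Dl : ℝ := (x2 - x1) * (y3 - y2) - (y2 - y1) * (x3 - x2) with hDl
  set dt : ℝ := (x2 - x1) * (x3 - x2) + (y2 - y1) * (y3 - y2) with hdt
  have key : Dl * (Dl * dt) * (a * x0 ^ 2 + b * x0 * y0 - a * y0 ^ 2 + d * x0 + e * y0 + f)
      = 0 := by
    linear_combination
      (-(Dl * (a * ((y3 - y2) ^ 2 - (x3 - x2) ^ 2) - b * (x3 - x2) * (y3 - y2)) *
          ((x0 - x1) * (y2 - y1) - (y0 - y1) * (x2 - x1)))
        + Dl * (b * (x2 - x1) * (y2 - y1) - a * ((y2 - y1) ^ 2 - (x2 - x1) ^ 2)) *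
          ((x0 - x2) * (y3 - y2) - (y0 - y2) * (x3 - x2))) * hI1
      + (-(Dl * (a * ((y3 - y2) ^ 2 - (x3 - x2) ^ 2) - b * (x3 - x2) * (y3 - y2)) *
          ((x0 - x1) * (y2 - y1) - (y0 - y1) * (x2 - x1)))) * hI2
      + (Dl * dt * (Dl - (y3 - y1) * (x0 - x1) + (y2 - y1) * (x0 - x1)
          - (x2 - x1) * (y0 - y1) + (x3 - x1) * (y0 - y1))) * hA
      + (Dl * dt * ((y3 - y1) * (x0 - x1) - (x3 - x1) * (y0 - y1))) * hB
      + (Dl * dt * (-((y2 - y1) * (x0 - x1)) + (x2 - x1) * (y0 - y1))) * hC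
  have hne : Dl * (Dl * dt) ≠ 0 := mul_ne_zero hD (mul_ne_zero hD hdot)
  exact (mul_eq_zero.mp key).resolve_left hne

private lemma det_ne_zero (A B C : EuclideanSpace ℝ (Fin 2))
    (hABC : AffineIndependent ℝ ![A, B, C]) :
    (B 0 - A 0) * (C 1 - A 1) - (B 1 - A 1) * (C 0 - A 0) ≠ 0 := by
  intro h
  rw [affineIndependent_iff_not_collinear_set] at hABC
  apply hABC
  have key : ∀ (P : EuclideanSpace ℝ (Fin 2)) (t : ℝ) (v : EuclideanSpace ℝ (Fin 2)),
      P 0 - A 0 = t * v 0 → P 1 - A 1 = t * v 1 → P = t • v +ᵥ A := by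
    intro P t v h0 h1
    ext i
    fin_cases i
    · show P 0 = t * v 0 + A 0
      linarith
    · show P 1 = t * v 1 + A 1
      linarith
  rw [collinear_iff_of_mem (show A ∈ ({A, B, C} : Set _) by simp)]
  by_cases hu0 : B 0 - A 0 = 0
  · by_cases hu1 : B 1 - A 1 = 0
    · refine ⟨C - A, ?_⟩
      intro p hp
      simp only [Set.mem_insert_iff, Set.mem_singleton_iff] at hp
      rcases hp with h' | h' | h' <;> rw [h']
      · exact ⟨0, key A 0 _ (by ring) (by ring)⟩
      · exact ⟨0, key B 0 _ (by simpa using hu0) (by simpa using hu1)⟩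
      · exact ⟨1, key C 1 _ (by simp [PiLp.sub_apply]) (by simp [PiLp.sub_apply])⟩
    · refine ⟨B - A, ?_⟩
      intro p hp
      simp only [Set.mem_insert_iff, Set.mem_singleton_iff] at hp
      rcases hp with h' | h' | h' <;> rw [h']
      · exact ⟨0, key A 0 _ (by ring) (by ring)⟩
      · exact ⟨1, key B 1 _ (by simp [PiLp.sub_apply]) (by simp [PiLp.sub_apply])⟩
      · refine ⟨(C 1 - A 1) / (B 1 - A 1), key C _ _ ?_ ?_⟩
        · simp only [PiLp.sub_apply]
          rw [div_mul_eq_mul_div, eq_div_iff hu1]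
          linear_combination -h
        · simp only [PiLp.sub_apply]
          rw [div_mul_eq_mul_div, eq_div_iff hu1]
  · refine ⟨B - A, ?_⟩
    intro p hp
    simp only [Set.mem_insert_iff, Set.mem_singleton_iff] at hp
    rcases hp with h' | h' | h' <;> rw [h']
    · exact ⟨0, key A 0 _ (by ring) (by ring)⟩
    · exact ⟨1, key B 1 _ (by simp [PiLp.sub_apply]) (by simp [PiLp.sub_apply])⟩
    · refine ⟨(C 0 - A 0) / (B 0 - A 0), key C _ _ ?_ ?_⟩
      · simp only [PiLp.sub_apply]
        rw [div_mul_eq_mul_div, eq_div_iff hu0]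
      · simp only [PiLp.sub_apply]
        rw [div_mul_eq_mul_div, eq_div_iff hu0]
        linear_combination h

set_option maxHeartbeats 1000000 in
/-- Every rectangular (equilateral) hyperbola through the vertices of a triangle passes
through its orthocenter: if a nonzero real polynomial of degree at most 2 with `a + c = 0`
vanishes at the affinely independent points `A`, `B`, `C`, then it vanishes at the
orthocenter `H` of the triangle `ABC`. -/
theorem rectangular_hyperbola_through_orthocenter
    (A B C H : EuclideanSpace ℝ (Fin 2))
    (hABC : AffineIndependent ℝ ![A, B, C])
    -- `H` is the orthocenter: the common point of the three altitudes
    (hH1 : ⟪H - A, C - B⟫ = (0 : ℝ))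
    (hH2 : ⟪H - B, A - C⟫ = (0 : ℝ))
    (hH3 : ⟪H - C, B - A⟫ = (0 : ℝ))
    (a b c d e f : ℝ)
    (hq : (a, b, c, d, e, f) ≠ (0, 0, 0, 0, 0, 0))
    (hrect : a + c = 0)
    (hA : conicEval a b c d e f A = 0)
    (hB : conicEval a b c d e f B = 0)
    (hC : conicEval a b c d e f C = 0) :
    conicEval a b c d e f H = 0 := by
  have hc : c = -a := by linarith
  subst hc
  simp only [conicEval] at hA hB hC ⊢
  simp only [PiLp.inner_apply, Fin.sum_univ_two, PiLp.sub_apply, RCLike.inner_apply,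
    starRingEnd_apply, star_trivial] at hH1 hH2 hH3
  have hA' : a * A 0 ^ 2 + b * A 0 * A 1 - a * A 1 ^ 2 + d * A 0 + e * A 1 + f = 0 := by
    linarith [hA]
  have hB' : a * B 0 ^ 2 + b * B 0 * B 1 - a * B 1 ^ 2 + d * B 0 + e * B 1 + f = 0 := by
    linarith [hB]
  have hC' : a * C 0 ^ 2 + b * C 0 * C 1 - a * C 1 ^ 2 + d * C 0 + e * C 1 + f = 0 := by
    linarith [hC]
  have hDet := det_ne_zero A B C hABC
  have hI1 : (H 0 - A 0) * (C 0 - B 0) + (H 1 - A 1) * (C 1 - B 1) = 0 := by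
    linear_combination hH1
  have hI2 : (H 0 - B 0) * (A 0 - C 0) + (H 1 - B 1) * (A 1 - C 1) = 0 := by
    linear_combination hH2
  have hI3 : (H 0 - C 0) * (B 0 - A 0) + (H 1 - C 1) * (B 1 - A 1) = 0 := by
    linear_combination hH3
  have hD : (B 0 - A 0) * (C 1 - B 1) - (B 1 - A 1) * (C 0 - B 0) ≠ 0 := by
    intro hz; exact hDet (by linear_combination hz)
  by_cases hdotB : (B 0 - A 0) * (C 0 - B 0) + (B 1 - A 1) * (C 1 - B 1) = 0
  · -- right angle at B; use cyclic permutation (B, C, A)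
    have hdotC : (C 0 - B 0) * (A 0 - C 0) + (C 1 - B 1) * (A 1 - C 1) ≠ 0 := by
      intro hz
      apply hD
      have hsq : (C 0 - B 0) ^ 2 + (C 1 - B 1) ^ 2 = 0 := by linear_combination -hdotB - hz
      have h0 : C 0 - B 0 = 0 := by nlinarith [sq_nonneg (C 0 - B 0), sq_nonneg (C 1 - B 1)]
      have h1 : C 1 - B 1 = 0 := by nlinarith [sq_nonneg (C 1 - B 1), sq_nonneg (C 0 - B 0)]
      linear_combination (B 0 - A 0) * h1 - (B 1 - A 1) * h0
    have hD' : (C 0 - B 0) * (A 1 - C 1) - (C 1 - B 1) * (A 0 - C 0) ≠ 0 := by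
      intro hz; exact hD (by linear_combination hz)
    have hres := rect_aux (B 0) (B 1) (C 0) (C 1) (A 0) (A 1) (H 0) (H 1) a b d e f
      hB' hC' hA' hI2 hI3 hD' hdotC
    linarith [hres]
  · have hres := rect_aux (A 0) (A 1) (B 0) (B 1) (C 0) (C 1) (H 0) (H 1) a b d e f
      hA' hB' hC' hI1 hI2 hD hdotB
    linarith [hres]
end

section
/- Let A, B, C, D ∈ ℝ² be four points, no three collinear, such that each pair of opposite sides is non-parallel, with diagonal points A₁ = AD ∩ BC, B₁ = AB ∩ CD, C₁ = AC ∩ BD. Then there exists a nonzero real polynomial q of degree at most 2 whose zero set contains: the six midpoints of the segments AB, AC, AD, BC, BD, CD; the three diagonal points A₁, B₁, C₁; and every point p ∈ ℝ² that is a center of some nonzero polynomial q' of degree at most 2 vanishing at A, B, C and D. (The zero set of q is the nine-point conic of the quadrangle: the locus of centers of all conics circumscribed about it.) -/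
private lemma npc_coordMid (P Q : EuclideanSpace ℝ (Fin 2)) (i : Fin 2) :
    (midpoint ℝ P Q) i = (P i + Q i) / 2 := by
  rw [midpoint_eq_smul_add]
  simp only [PiLp.smul_apply, PiLp.add_apply, smul_eq_mul, invOf_eq_inv]
  ring

private lemma npc_lineCoord {P Q X : EuclideanSpace ℝ (Fin 2)} (h : X ∈ line[ℝ, P, Q]) :
    (Q 1 - P 1) * (X 0 - P 0) - (Q 0 - P 0) * (X 1 - P 1) = 0 := by
  obtain ⟨r, hr⟩ : ∃ r : ℝ, r • (Q -ᵥ P) = X -ᵥ P := by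
    rw [← vadd_left_mem_affineSpan_pair]; simpa [vsub_vadd] using h
  have h0 := congrFun (congrArg WithLp.ofLp hr) 0
  have h1 := congrFun (congrArg WithLp.ofLp hr) 1
  simp only [PiLp.smul_apply, PiLp.sub_apply, vsub_eq_sub, smul_eq_mul] at h0 h1
  linear_combination (Q 0 - P 0) * h1 - (Q 1 - P 1) * h0

private lemma npc_crossNe {P Q R : EuclideanSpace ℝ (Fin 2)}
    (h : AffineIndependent ℝ ![P, Q, R]) :
    (Q 0 - P 0) * (R 1 - P 1) - (Q 1 - P 1) * (R 0 - P 0) ≠ 0 := by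
  intro hc
  have key : ∀ s t : ℝ, s * (Q 0 - P 0) + t * (R 0 - P 0) = 0 →
      s * (Q 1 - P 1) + t * (R 1 - P 1) = 0 → (s = 0 ∧ t = 0) := by
    intro s t h0 h1
    have hsum : ∑ i, (![-s - t, s, t] : Fin 3 → ℝ) i = 0 := by
      simp [Fin.sum_univ_three]; ring
    have hz : Finset.univ.weightedVSub ![P, Q, R] ![-s - t, s, t] = 0 := by
      rw [Finset.univ.weightedVSub_eq_weightedVSubOfPoint_of_sum_eq_zero ![-s - t, s, t]
        ![P, Q, R] hsum P, Finset.weightedVSubOfPoint_apply]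
      simp only [Fin.sum_univ_three, Matrix.cons_val_zero, Matrix.cons_val_one,
        Matrix.head_cons, Matrix.cons_val_two, Matrix.tail_cons]
      apply WithLp.ofLp_injective 2
      funext i
      fin_cases i
      · simp only [PiLp.add_apply, PiLp.smul_apply, PiLp.sub_apply, PiLp.zero_apply,
          vsub_eq_sub, smul_eq_mul]
        show (-s - t) * (P 0 - P 0) + s * (Q 0 - P 0) + t * (R 0 - P 0) = 0
        linear_combination h0
      · simp only [PiLp.add_apply, PiLp.smul_apply, PiLp.sub_apply, PiLp.zero_apply,
          vsub_eq_sub, smul_eq_mul]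
        show (-s - t) * (P 1 - P 1) + s * (Q 1 - P 1) + t * (R 1 - P 1) = 0
        linear_combination h1
    have hw := (affineIndependent_iff_of_fintype (k := ℝ) ![P, Q, R]).mp h ![-s - t, s, t] hsum hz
    have hs := hw 1
    have ht := hw 2
    simp only [Matrix.cons_val_one, Matrix.head_cons, Matrix.cons_val_two,
      Matrix.tail_cons] at hs ht
    exact ⟨hs, ht⟩
  by_cases hu0 : Q 0 - P 0 = 0
  · by_cases hu1 : Q 1 - P 1 = 0
    · have hQP : Q = P := by
        apply WithLp.ofLp_injective 2
        funext i
        fin_cases i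
        · show Q 0 = P 0; linarith
        · show Q 1 = P 1; linarith
      have h01 : (0 : Fin 3) = 1 := h.injective (by simp [hQP])
      exact absurd h01 (by decide)
    · have hkey := key (R 1 - P 1) (-(Q 1 - P 1)) (by linear_combination hc) (by ring)
      exact hu1 (neg_eq_zero.mp hkey.2)
  · have hkey := key (R 0 - P 0) (-(Q 0 - P 0)) (by ring) (by linear_combination -hc)
    exact hu0 (neg_eq_zero.mp hkey.2)

set_option maxHeartbeats 4000000 in
/-- **The nine-point conic of a complete quadrangle.** For a complete quadrangle `A B C D`
(no three points collinear, opposite sides non-parallel) with diagonal points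
`A₁ = AD ∩ BC`, `B₁ = AB ∩ CD`, `C₁ = AC ∩ BD`, there is one conic (the zero set of a nonzero
polynomial of degree at most 2) passing through the six midpoints of the sides, the three
diagonal points, and every center of every conic circumscribed about the quadrangle. -/
theorem nine_point_conic
    (A B C D A₁ B₁ C₁ : EuclideanSpace ℝ (Fin 2))
    (h1 : AffineIndependent ℝ ![A, B, C])
    (h2 : AffineIndependent ℝ ![A, B, D])
    (h3 : AffineIndependent ℝ ![A, C, D])
    (h4 : AffineIndependent ℝ ![B, C, D])
    (hpar1 : ¬ AffineSubspace.Parallel line[ℝ, A, B] line[ℝ, C, D])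
    (hpar2 : ¬ AffineSubspace.Parallel line[ℝ, A, C] line[ℝ, B, D])
    (hpar3 : ¬ AffineSubspace.Parallel line[ℝ, A, D] line[ℝ, B, C])
    (hA₁1 : A₁ ∈ line[ℝ, A, D]) (hA₁2 : A₁ ∈ line[ℝ, B, C])
    (hB₁1 : B₁ ∈ line[ℝ, A, B]) (hB₁2 : B₁ ∈ line[ℝ, C, D])
    (hC₁1 : C₁ ∈ line[ℝ, A, C]) (hC₁2 : C₁ ∈ line[ℝ, B, D]) :
    ∃ a b c d e f : ℝ, (a, b, c, d, e, f) ≠ (0, 0, 0, 0, 0, 0) ∧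
      conicEval a b c d e f (midpoint ℝ A B) = 0 ∧
      conicEval a b c d e f (midpoint ℝ A C) = 0 ∧
      conicEval a b c d e f (midpoint ℝ A D) = 0 ∧
      conicEval a b c d e f (midpoint ℝ B C) = 0 ∧
      conicEval a b c d e f (midpoint ℝ B D) = 0 ∧
      conicEval a b c d e f (midpoint ℝ C D) = 0 ∧
      conicEval a b c d e f A₁ = 0 ∧
      conicEval a b c d e f B₁ = 0 ∧
      conicEval a b c d e f C₁ = 0 ∧
      ∀ (a' b' c' d' e' f' : ℝ) (p : EuclideanSpace ℝ (Fin 2)),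
        (a', b', c', d', e', f') ≠ (0, 0, 0, 0, 0, 0) →
        conicEval a' b' c' d' e' f' A = 0 →
        conicEval a' b' c' d' e' f' B = 0 →
        conicEval a' b' c' d' e' f' C = 0 →
        conicEval a' b' c' d' e' f' D = 0 →
        (∀ v : EuclideanSpace ℝ (Fin 2),
          conicEval a' b' c' d' e' f' (p + v) = conicEval a' b' c' d' e' f' (p - v)) →
        conicEval a b c d e f p = 0 := by
  refine ⟨((-2) * B 1 * C 1 * C 1 * D 0 + 2 * B 1 * C 0 * D 1 * D 1 + 2 * B 1 * B 1 * C 1 * D 0 + (-2) * B 1 * B 1 * C 0 * D 1 + (-2) * B 0 * C 1 * D 1 * D 1 + 2 * B 0 * C 1 * C 1 * D 1 + 2 * A 1 * C 1 * C 1 * D 0 + (-2) * A 1 * C 0 * D 1 * D 1 + (-2) * A 1 * B 1 * B 1 * D 0 + 2 * A 1 * B 1 * B 1 * C 0 + 2 * A 1 * B 0 * D 1 * D 1 + (-2) * A 1 * B 0 * C 1 * C 1 + (-2) * A 1 * A 1 * C 1 * D 0 + 2 * A 1 * A 1 * C 0 * D 1 + 2 * A 1 * A 1 * B 1 * D 0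 + (-2) * A 1 * A 1 * B 1 * C 0 + (-2) * A 1 * A 1 * B 0 * D 1 + 2 * A 1 * A 1 * B 0 * C 1 + 2 * A 0 * C 1 * D 1 * D 1 + (-2) * A 0 * C 1 * C 1 * D 1 + (-2) * A 0 * B 1 * D 1 * D 1 + 2 * A 0 * B 1 * C 1 * C 1 + 2 * A 0 * B 1 * B 1 * D 1 + (-2) * A 0 * B 1 * B 1 * C 1),
    ((-4) * B 1 * C 0 * D 0 * D 1 + 4 * B 1 * C 0 * C 1 * D 0 + 4 * B 0 * C 1 * D 0 * D 1 + (-4) * B 0 * C 0 * C 1 * D 1 + (-4) * B 0 * B 1 * C 1 * D 0 + 4 * B 0 * B 1 * C 0 * D 1 + 4 * A 1 * C 0 * D 0 * D 1 + (-4) * A 1 * C 0 * C 1 * D 0 + (-4) * A 1 * B 0 * D 0 * D 1 + 4 * A 1 * B 0 * C 0 * C 1 + 4 * A 1 * B 0 * B 1 * D 0 + (-4) * A 1 * B 0 * B 1 * C 0 + (-4) * A 0 * C 1 * D 0 * D 1 + 4 * A 0 * C 0 * C 1 * D 1 + 4 * A 0 * B 1 * D 0 * D 1 + (-4) * A 0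 * B 1 * C 0 * C 1 + (-4) * A 0 * B 0 * B 1 * D 1 + 4 * A 0 * B 0 * B 1 * C 1 + 4 * A 0 * A 1 * C 1 * D 0 + (-4) * A 0 * A 1 * C 0 * D 1 + (-4) * A 0 * A 1 * B 1 * D 0 + 4 * A 0 * A 1 * B 1 * C 0 + 4 * A 0 * A 1 * B 0 * D 1 + (-4) * A 0 * A 1 * B 0 * C 1),
    (2 * B 1 * C 0 * D 0 * D 0 + (-2) * B 1 * C 0 * C 0 * D 0 + (-2) * B 0 * C 1 * D 0 * D 0 + 2 * B 0 * C 0 * C 0 * D 1 + 2 * B 0 * B 0 * C 1 * D 0 + (-2) * B 0 * B 0 * C 0 * D 1 + (-2) * A 1 * C 0 * D 0 * D 0 + 2 * A 1 * C 0 * C 0 * D 0 + 2 * A 1 * B 0 * D 0 * D 0 + (-2) * A 1 * B 0 * C 0 * C 0 + (-2) * A 1 * B 0 * B 0 * D 0 + 2 * A 1 * B 0 * B 0 * C 0 + 2 * A 0 * C 1 * D 0 * D 0 + (-2) * A 0 * C 0 * C 0 * D 1 + (-2) * A 0 * B 1 * D 0 * D 0 + 2 * A 0 * B 1 * C 0 *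 C 0 + 2 * A 0 * B 0 * B 0 * D 1 + (-2) * A 0 * B 0 * B 0 * C 1 + (-2) * A 0 * A 0 * C 1 * D 0 + 2 * A 0 * A 0 * C 0 * D 1 + 2 * A 0 * A 0 * B 1 * D 0 + (-2) * A 0 * A 0 * B 1 * C 0 + (-2) * A 0 * A 0 * B 0 * D 1 + 2 * A 0 * A 0 * B 0 * C 1),
    (1 * B 1 * C 1 * C 1 * D 0 * D 0 + (-1) * B 1 * C 0 * C 0 * D 1 * D 1 + (-1) * B 1 * B 1 * C 1 * D 0 * D 0 + 2 * B 1 * B 1 * C 0 * D 0 * D 1 + (-2) * B 1 * B 1 * C 0 * C 1 * D 0 + 1 * B 1 * B 1 * C 0 * C 0 * D 1 + (-2) * B 0 * C 1 * C 1 * D 0 * D 1 + 2 * B 0 * C 0 * C 1 * D 1 * D 1 + 2 * B 0 * B 1 * C 1 * C 1 * D 0 + (-2) * B 0 * B 1 * C 0 * D 1 * D 1 + 1 * B 0 * B 0 * C 1 * D 1 * D 1 + (-1) * B 0 * B 0 * C 1 * C 1 * D 1 + (-1) * A 1 * C 1 * C 1 * D 0 * D 0 + 1 * A 1 * C 0 *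 C 0 * D 1 * D 1 + 1 * A 1 * B 1 * B 1 * D 0 * D 0 + (-1) * A 1 * B 1 * B 1 * C 0 * C 0 + (-1) * A 1 * B 0 * B 0 * D 1 * D 1 + 1 * A 1 * B 0 * B 0 * C 1 * C 1 + 1 * A 1 * A 1 * C 1 * D 0 * D 0 + (-2) * A 1 * A 1 * C 0 * D 0 * D 1 + 2 * A 1 * A 1 * C 0 * C 1 * D 0 + (-1) * A 1 * A 1 * C 0 * C 0 * D 1 + (-1) * A 1 * A 1 * B 1 * D 0 * D 0 + 1 * A 1 * A 1 * B 1 * C 0 * C 0 + 2 * A 1 * A 1 * B 0 * D 0 * D 1 + (-2) * A 1 * A 1 * B 0 * C 0 * C 1 + (-2) * A 1 * A 1 * B 0 * B 1 * D 0 + 2 * A 1 * A 1 * B 0 * B 1 * C 0 + 1 * A 1 * A 1 * B 0 * B 0 * D 1 + (-1) * A 1 * A 1 * B 0 * B 0 * C 1 + 2 * A 0 * C 1 * C 1 * D 0 * D 1 + (-2) * A 0 * C 0 * C 1 * D 1 * D 1 + (-2) * A 0 * B 1 * B 1 * D 0 * D 1 + 2 * A 0 * B 1 * B 1 * C 0 *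 C 1 + 2 * A 0 * B 0 * B 1 * D 1 * D 1 + (-2) * A 0 * B 0 * B 1 * C 1 * C 1 + (-2) * A 0 * A 1 * C 1 * C 1 * D 0 + 2 * A 0 * A 1 * C 0 * D 1 * D 1 + 2 * A 0 * A 1 * B 1 * B 1 * D 0 + (-2) * A 0 * A 1 * B 1 * B 1 * C 0 + (-2) * A 0 * A 1 * B 0 * D 1 * D 1 + 2 * A 0 * A 1 * B 0 * C 1 * C 1 + (-1) * A 0 * A 0 * C 1 * D 1 * D 1 + 1 * A 0 * A 0 * C 1 * C 1 * D 1 + 1 * A 0 * A 0 * B 1 * D 1 * D 1 + (-1) * A 0 * A 0 * B 1 * C 1 * C 1 + (-1) * A 0 * A 0 * B 1 * B 1 * D 1 + 1 * A 0 * A 0 * B 1 * B 1 * C 1),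
    ((-2) * B 1 * C 0 * C 1 * D 0 * D 0 + 2 * B 1 * C 0 * C 0 * D 0 * D 1 + (-1) * B 1 * B 1 * C 0 * D 0 * D 0 + 1 * B 1 * B 1 * C 0 * C 0 * D 0 + 1 * B 0 * C 1 * C 1 * D 0 * D 0 + (-1) * B 0 * C 0 * C 0 * D 1 * D 1 + 2 * B 0 * B 1 * C 1 * D 0 * D 0 + (-2) * B 0 * B 1 * C 0 * C 0 * D 1 + (-2) * B 0 * B 0 * C 1 * D 0 * D 1 + (-1) * B 0 * B 0 * C 1 * C 1 * D 0 + 1 * B 0 * B 0 * C 0 * D 1 * D 1 + 2 * B 0 * B 0 * C 0 * C 1 * D 1 + 2 * A 1 * C 0 * C 1 * D 0 * D 0 + (-2) * A 1 * C 0 * C 0 * D 0 * D 1 + (-2) * A 1 * B 0 * B 1 * D 0 * D 0 + 2 * A 1 * B 0 * B 1 * C 0 * C 0 + 2 * A 1 * B 0 * B 0 * D 0 * D 1 + (-2) * A 1 * B 0 * B 0 * C 0 * C 1 + 1 * A 1 * A 1 * C 0 * D 0 * D 0 + (-1) * A 1 * A 1 * C 0 * C 0 * D 0 + (-1) * A 1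 * A 1 * B 0 * D 0 * D 0 + 1 * A 1 * A 1 * B 0 * C 0 * C 0 + 1 * A 1 * A 1 * B 0 * B 0 * D 0 + (-1) * A 1 * A 1 * B 0 * B 0 * C 0 + (-1) * A 0 * C 1 * C 1 * D 0 * D 0 + 1 * A 0 * C 0 * C 0 * D 1 * D 1 + 1 * A 0 * B 1 * B 1 * D 0 * D 0 + (-1) * A 0 * B 1 * B 1 * C 0 * C 0 + (-1) * A 0 * B 0 * B 0 * D 1 * D 1 + 1 * A 0 * B 0 * B 0 * C 1 * C 1 + (-2) * A 0 * A 1 * C 1 * D 0 * D 0 + 2 * A 0 * A 1 * C 0 * C 0 * D 1 + 2 * A 0 * A 1 * B 1 * D 0 * D 0 + (-2) * A 0 * A 1 * B 1 * C 0 * C 0 + (-2) * A 0 * A 1 * B 0 * B 0 * D 1 + 2 * A 0 * A 1 * B 0 * B 0 * C 1 + 2 * A 0 * A 0 * C 1 * D 0 * D 1 + 1 * A 0 * A 0 * C 1 * C 1 * D 0 + (-1) * A 0 * A 0 * C 0 * D 1 * D 1 + (-2) * A 0 * A 0 * C 0 * C 1 * D 1 + (-2) * A 0 * A 0 * B 1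 * D 0 * D 1 + 2 * A 0 * A 0 * B 1 * C 0 * C 1 + (-1) * A 0 * A 0 * B 1 * B 1 * D 0 + 1 * A 0 * A 0 * B 1 * B 1 * C 0 + 1 * A 0 * A 0 * B 0 * D 1 * D 1 + (-1) * A 0 * A 0 * B 0 * C 1 * C 1 + 2 * A 0 * A 0 * B 0 * B 1 * D 1 + (-2) * A 0 * A 0 * B 0 * B 1 * C 1),
    (1 * B 1 * B 1 * C 0 * C 1 * D 0 * D 0 + (-1) * B 1 * B 1 * C 0 * C 0 * D 0 * D 1 + (-1) * B 0 * B 1 * C 1 * C 1 * D 0 * D 0 + 1 * B 0 * B 1 * C 0 * C 0 * D 1 * D 1 + 1 * B 0 * B 0 * C 1 * C 1 * D 0 * D 1 + (-1) * B 0 * B 0 * C 0 * C 1 * D 1 * D 1 + (-1) * A 1 * A 1 * C 0 * C 1 * D 0 * D 0 + 1 * A 1 * A 1 * C 0 * C 0 * D 0 * D 1 + 1 * A 1 * A 1 * B 0 * B 1 * D 0 * D 0 + (-1) * A 1 * A 1 * B 0 * B 1 * C 0 * C 0 + (-1) * A 1 * A 1 * B 0 * B 0 * D 0 * D 1 + 1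 * A 1 * A 1 * B 0 * B 0 * C 0 * C 1 + 1 * A 0 * A 1 * C 1 * C 1 * D 0 * D 0 + (-1) * A 0 * A 1 * C 0 * C 0 * D 1 * D 1 + (-1) * A 0 * A 1 * B 1 * B 1 * D 0 * D 0 + 1 * A 0 * A 1 * B 1 * B 1 * C 0 * C 0 + 1 * A 0 * A 1 * B 0 * B 0 * D 1 * D 1 + (-1) * A 0 * A 1 * B 0 * B 0 * C 1 * C 1 + (-1) * A 0 * A 0 * C 1 * C 1 * D 0 * D 1 + 1 * A 0 * A 0 * C 0 * C 1 * D 1 * D 1 + 1 * A 0 * A 0 * B 1 * B 1 * D 0 * D 1 + (-1) * A 0 * A 0 * B 1 * B 1 * C 0 * C 1 + (-1) * A 0 * A 0 * B 0 * B 1 * D 1 * D 1 + 1 * A 0 * A 0 * B 0 * B 1 * C 1 * C 1), ?_, ?_, ?_, ?_, ?_, ?_, ?_, ?_, ?_, ?_, ?_⟩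
  · -- nonzero: the conic evaluates at A to minus a product of three nonzero determinants
    intro hzero
    rw [Prod.mk.injEq, Prod.mk.injEq, Prod.mk.injEq, Prod.mk.injEq, Prod.mk.injEq] at hzero
    obtain ⟨ha, hb, hc, hd, he, hf⟩ := hzero
    have hprod : ((B 0 - A 0) * (C 1 - A 1) - (B 1 - A 1) * (C 0 - A 0)) *
        (((B 0 - A 0) * (D 1 - A 1) - (B 1 - A 1) * (D 0 - A 0)) *
         ((C 0 - A 0) * (D 1 - A 1) - (C 1 - A 1) * (D 0 - A 0))) = 0 := by
      linear_combination (-(A 0 * A 0)) * ha - A 0 * A 1 * hb - A 1 * A 1 * hc - A 0 * hd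
        - A 1 * he - hf
    rcases mul_eq_zero.mp hprod with h | h
    · exact npc_crossNe h1 h
    · rcases mul_eq_zero.mp h with h | h
      · exact npc_crossNe h2 h
      · exact npc_crossNe h3 h
  · simp only [conicEval, npc_coordMid]; ring
  · simp only [conicEval, npc_coordMid]; ring
  · simp only [conicEval, npc_coordMid]; ring
  · simp only [conicEval, npc_coordMid]; ring
  · simp only [conicEval, npc_coordMid]; ring
  · simp only [conicEval, npc_coordMid]; ring
  · -- A₁ on lines AD and BC
    have had := npc_lineCoord hA₁1
    have hbc := npc_lineCoord hA₁2
    simp only [conicEval]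
    linear_combination ((((B 1 - A 1) * (A₁ 0 - A 0) - (B 0 - A 0) * (A₁ 1 - A 1)) * (D 1 - C 1) + ((D 1 - C 1) * (A₁ 0 - C 0) - (D 0 - C 0) * (A₁ 1 - C 1)) * (B 1 - A 1)) * (C 0 - B 0) + (-((B 1 - A 1) * (A₁ 0 - A 0) - (B 0 - A 0) * (A₁ 1 - A 1)) * (D 0 - C 0) - ((D 1 - C 1) * (A₁ 0 - C 0) - (D 0 - C 0) * (A₁ 1 - C 1)) * (B 0 - A 0)) * (C 1 - B 1)) * had + ((((B 1 - A 1) * (A₁ 0 - A 0) - (B 0 - A 0) * (A₁ 1 - A 1)) * (D 1 - C 1) + ((D 1 - C 1) * (A₁ 0 - C 0) - (D 0 - C 0) * (A₁ 1 - C 1)) * (B 1 - A 1)) * (D 0 - A 0) + (-((B 1 - A 1) * (A₁ 0 - A 0) - (B 0 - A 0) * (A₁ 1 - A 1)) * (D 0 - C 0) - ((D 1 - C 1) * (A₁ 0 - C 0) - (D 0 - C 0) * (A₁ 1 - C 1)) * (B 0 - A 0)) * (D 1 - A 1)) * hbc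
  · -- B₁ on lines AB and CD
    have hab := npc_lineCoord hB₁1
    have hcd := npc_lineCoord hB₁2
    simp only [conicEval]
    linear_combination (-((D 1 - C 1) * (-((C 1 - A 1) * (B₁ 0 - A 0) - (C 0 - A 0) * (B₁ 1 - A 1)) * (D 0 - B 0) - ((D 1 - B 1) * (B₁ 0 - B 0) - (D 0 - B 0) * (B₁ 1 - B 1)) * (C 0 - A 0)) + (D 0 - C 0) * (((C 1 - A 1) * (B₁ 0 - A 0) - (C 0 - A 0) * (B₁ 1 - A 1)) * (D 1 - B 1) + ((D 1 - B 1) * (B₁ 0 - B 0) - (D 0 - B 0) * (B₁ 1 - B 1)) * (C 1 - A 1)))) * hab + (-((B 1 - A 1) * (-((C 1 - A 1) * (B₁ 0 - A 0) - (C 0 - A 0) * (B₁ 1 - A 1)) * (D 0 - B 0) - ((D 1 - B 1) * (B₁ 0 - B 0) - (D 0 - B 0) * (B₁ 1 - B 1)) * (C 0 - A 0)) + (B 0 - A 0) * (((C 1 - A 1) * (B₁ 0 - A 0) - (C 0 - A 0) * (B₁ 1 - A 1)) * (D 1 - B 1) + ((D 1 - B 1) * (B₁ 0 - B 0) - (D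 0 - B 0) * (B₁ 1 - B 1)) * (C 1 - A 1)))) * hcd
  · -- C₁ on lines AC and BD
    have hac := npc_lineCoord hC₁1
    have hbd := npc_lineCoord hC₁2
    simp only [conicEval]
    linear_combination ((((B 1 - A 1) * (C₁ 0 - A 0) - (B 0 - A 0) * (C₁ 1 - A 1)) * (D 1 - C 1) + ((D 1 - C 1) * (C₁ 0 - C 0) - (D 0 - C 0) * (C₁ 1 - C 1)) * (B 1 - A 1)) * (D 0 - B 0) + (-((B 1 - A 1) * (C₁ 0 - A 0) - (B 0 - A 0) * (C₁ 1 - A 1)) * (D 0 - C 0) - ((D 1 - C 1) * (C₁ 0 - C 0) - (D 0 - C 0) * (C₁ 1 - C 1)) * (B 0 - A 0)) * (D 1 - B 1)) * hac + ((((B 1 - A 1) * (C₁ 0 - A 0) - (B 0 - A 0) * (C₁ 1 - A 1)) * (D 1 - C 1) + ((D 1 - C 1) * (C₁ 0 - C 0) - (D 0 - C 0) * (C₁ 1 - C 1)) * (B 1 - A 1)) * (C 0 - A 0) + (-((B 1 - A 1) * (C₁ 0 - A 0) - (B 0 - A 0) * (C₁ 1 - A 1)) * (D 0 - C 0) - ((D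 1 - C 1) * (C₁ 0 - C 0) - (D 0 - C 0) * (C₁ 1 - C 1)) * (B 0 - A 0)) * (C 1 - A 1)) * hbd
  · -- centers of circumscribed conics
    intro a' b' c' d' e' f' p hne hqA hqB hqC hqD hcen
    simp only [conicEval] at hqA hqB hqC hqD
    have hg1 : 2 * a' * p 0 + b' * p 1 + d' = 0 := by
      have h := hcen (EuclideanSpace.single 0 1)
      simp only [conicEval, PiLp.add_apply, PiLp.sub_apply, EuclideanSpace.single_apply] at h
      norm_num at h
      linear_combination h / 2
    have hg2 : b' * p 0 + 2 * c' * p 1 + e' = 0 := by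
      have h := hcen (EuclideanSpace.single 1 1)
      simp only [conicEval, PiLp.add_apply, PiLp.sub_apply, EuclideanSpace.single_apply] at h
      norm_num at h
      linear_combination h / 2
    have hqA' : a' * (A 0 ^ 2 - 2 * p 0 * A 0) + b' * (A 0 * A 1 - p 1 * A 0 - p 0 * A 1) +
        c' * (A 1 ^ 2 - 2 * p 1 * A 1) + f' = 0 := by
      linear_combination hqA - A 0 * hg1 - A 1 * hg2
    have hqB' : a' * (B 0 ^ 2 - 2 * p 0 * B 0) + b' * (B 0 * B 1 - p 1 * B 0 - p 0 * B 1) +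
        c' * (B 1 ^ 2 - 2 * p 1 * B 1) + f' = 0 := by
      linear_combination hqB - B 0 * hg1 - B 1 * hg2
    have hqC' : a' * (C 0 ^ 2 - 2 * p 0 * C 0) + b' * (C 0 * C 1 - p 1 * C 0 - p 0 * C 1) +
        c' * (C 1 ^ 2 - 2 * p 1 * C 1) + f' = 0 := by
      linear_combination hqC - C 0 * hg1 - C 1 * hg2
    have hqD' : a' * (D 0 ^ 2 - 2 * p 0 * D 0) + b' * (D 0 * D 1 - p 1 * D 0 - p 0 * D 1) +
        c' * (D 1 ^ 2 - 2 * p 1 * D 1) + f' = 0 := by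
      linear_combination hqD - D 0 * hg1 - D 1 * hg2
    have hS : a' ^ 2 + b' ^ 2 + c' ^ 2 + f' ^ 2 ≠ 0 := by
      intro h0
      apply hne
      have ha : a' = 0 := by
        nlinarith [sq_nonneg a', sq_nonneg b', sq_nonneg c', sq_nonneg f']
      have hb : b' = 0 := by
        nlinarith [sq_nonneg a', sq_nonneg b', sq_nonneg c', sq_nonneg f']
      have hc : c' = 0 := by
        nlinarith [sq_nonneg a', sq_nonneg b', sq_nonneg c', sq_nonneg f']
      have hf : f' = 0 := by
        nlinarith [sq_nonneg a', sq_nonneg b', sq_nonneg c', sq_nonneg f']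
      have hd : d' = 0 := by rw [ha, hb] at hg1; linarith
      have he : e' = 0 := by rw [hb, hc] at hg2; linarith
      rw [ha, hb, hc, hd, he, hf]
    have key : conicEval ((-2) * B 1 * C 1 * C 1 * D 0 + 2 * B 1 * C 0 * D 1 * D 1 + 2 * B 1 * B 1 * C 1 * D 0 + (-2) * B 1 * B 1 * C 0 * D 1 + (-2) * B 0 * C 1 * D 1 * D 1 + 2 * B 0 * C 1 * C 1 * D 1 + 2 * A 1 * C 1 * C 1 * D 0 + (-2) * A 1 * C 0 * D 1 * D 1 + (-2) * A 1 * B 1 * B 1 * D 0 + 2 * A 1 * B 1 * B 1 * C 0 + 2 * A 1 * B 0 * D 1 * D 1 + (-2) * A 1 * B 0 * C 1 * C 1 + (-2) * A 1 * A 1 * C 1 * D 0 + 2 * A 1 * A 1 * C 0 * D 1 + 2 * A 1 * A 1 * B 1 * D 0 + (-2) * A 1 * A 1 * B 1 * C 0 + (-2) * A 1 * A 1 * B 0 * D 1 + 2 * A 1 * A 1 * B 0 * C 1 + 2 * A 0 * C 1 * D 1 * D 1 + (-2) * A 0 * C 1 * C 1 * D 1 + (-2) * A 0 * B 1 * D 1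 * D 1 + 2 * A 0 * B 1 * C 1 * C 1 + 2 * A 0 * B 1 * B 1 * D 1 + (-2) * A 0 * B 1 * B 1 * C 1)
        ((-4) * B 1 * C 0 * D 0 * D 1 + 4 * B 1 * C 0 * C 1 * D 0 + 4 * B 0 * C 1 * D 0 * D 1 + (-4) * B 0 * C 0 * C 1 * D 1 + (-4) * B 0 * B 1 * C 1 * D 0 + 4 * B 0 * B 1 * C 0 * D 1 + 4 * A 1 * C 0 * D 0 * D 1 + (-4) * A 1 * C 0 * C 1 * D 0 + (-4) * A 1 * B 0 * D 0 * D 1 + 4 * A 1 * B 0 * C 0 * C 1 + 4 * A 1 * B 0 * B 1 * D 0 + (-4) * A 1 * B 0 * B 1 * C 0 + (-4) * A 0 * C 1 * D 0 * D 1 + 4 * A 0 * C 0 * C 1 * D 1 + 4 * A 0 * B 1 * D 0 * D 1 + (-4) * A 0 * B 1 * C 0 * C 1 + (-4) * A 0 * B 0 * B 1 * D 1 + 4 * A 0 * B 0 * B 1 * C 1 + 4 * A 0 * A 1 * C 1 * D 0 + (-4) * A 0 * A 1 * C 0 * D 1 + (-4) * A 0 * A 1 * B 1 * D 0 + 4 *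 A 0 * A 1 * B 1 * C 0 + 4 * A 0 * A 1 * B 0 * D 1 + (-4) * A 0 * A 1 * B 0 * C 1)
        (2 * B 1 * C 0 * D 0 * D 0 + (-2) * B 1 * C 0 * C 0 * D 0 + (-2) * B 0 * C 1 * D 0 * D 0 + 2 * B 0 * C 0 * C 0 * D 1 + 2 * B 0 * B 0 * C 1 * D 0 + (-2) * B 0 * B 0 * C 0 * D 1 + (-2) * A 1 * C 0 * D 0 * D 0 + 2 * A 1 * C 0 * C 0 * D 0 + 2 * A 1 * B 0 * D 0 * D 0 + (-2) * A 1 * B 0 * C 0 * C 0 + (-2) * A 1 * B 0 * B 0 * D 0 + 2 * A 1 * B 0 * B 0 * C 0 + 2 * A 0 * C 1 * D 0 * D 0 + (-2) * A 0 * C 0 * C 0 * D 1 + (-2) * A 0 * B 1 * D 0 * D 0 + 2 * A 0 * B 1 * C 0 * C 0 + 2 * A 0 * B 0 * B 0 * D 1 + (-2) * A 0 * B 0 * B 0 * C 1 + (-2) * A 0 * A 0 * C 1 * D 0 + 2 * A 0 * A 0 * C 0 * D 1 + 2 * A 0 * A 0 * B 1 * D 0 + (-2) * A 0 * A 0 *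 B 1 * C 0 + (-2) * A 0 * A 0 * B 0 * D 1 + 2 * A 0 * A 0 * B 0 * C 1)
        (1 * B 1 * C 1 * C 1 * D 0 * D 0 + (-1) * B 1 * C 0 * C 0 * D 1 * D 1 + (-1) * B 1 * B 1 * C 1 * D 0 * D 0 + 2 * B 1 * B 1 * C 0 * D 0 * D 1 + (-2) * B 1 * B 1 * C 0 * C 1 * D 0 + 1 * B 1 * B 1 * C 0 * C 0 * D 1 + (-2) * B 0 * C 1 * C 1 * D 0 * D 1 + 2 * B 0 * C 0 * C 1 * D 1 * D 1 + 2 * B 0 * B 1 * C 1 * C 1 * D 0 + (-2) * B 0 * B 1 * C 0 * D 1 * D 1 + 1 * B 0 * B 0 * C 1 * D 1 * D 1 + (-1) * B 0 * B 0 * C 1 * C 1 * D 1 + (-1) * A 1 * C 1 * C 1 * D 0 * D 0 + 1 * A 1 * C 0 * C 0 * D 1 * D 1 + 1 * A 1 * B 1 * B 1 * D 0 * D 0 + (-1) * A 1 * B 1 * B 1 * C 0 * C 0 + (-1) * A 1 * B 0 * B 0 * D 1 * D 1 + 1 * A 1 * B 0 * B 0 * C 1 * C 1 + 1 * A 1 *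 A 1 * C 1 * D 0 * D 0 + (-2) * A 1 * A 1 * C 0 * D 0 * D 1 + 2 * A 1 * A 1 * C 0 * C 1 * D 0 + (-1) * A 1 * A 1 * C 0 * C 0 * D 1 + (-1) * A 1 * A 1 * B 1 * D 0 * D 0 + 1 * A 1 * A 1 * B 1 * C 0 * C 0 + 2 * A 1 * A 1 * B 0 * D 0 * D 1 + (-2) * A 1 * A 1 * B 0 * C 0 * C 1 + (-2) * A 1 * A 1 * B 0 * B 1 * D 0 + 2 * A 1 * A 1 * B 0 * B 1 * C 0 + 1 * A 1 * A 1 * B 0 * B 0 * D 1 + (-1) * A 1 * A 1 * B 0 * B 0 * C 1 + 2 * A 0 * C 1 * C 1 * D 0 * D 1 + (-2) * A 0 * C 0 * C 1 * D 1 * D 1 + (-2) * A 0 * B 1 * B 1 * D 0 * D 1 + 2 * A 0 * B 1 * B 1 * C 0 * C 1 + 2 * A 0 * B 0 * B 1 * D 1 * D 1 + (-2) * A 0 * B 0 * B 1 * C 1 * C 1 + (-2) * A 0 * A 1 * C 1 * C 1 * D 0 + 2 * A 0 * A 1 * C 0 * D 1 * D 1 + 2 * A 0 * A 1 * B 1 *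 B 1 * D 0 + (-2) * A 0 * A 1 * B 1 * B 1 * C 0 + (-2) * A 0 * A 1 * B 0 * D 1 * D 1 + 2 * A 0 * A 1 * B 0 * C 1 * C 1 + (-1) * A 0 * A 0 * C 1 * D 1 * D 1 + 1 * A 0 * A 0 * C 1 * C 1 * D 1 + 1 * A 0 * A 0 * B 1 * D 1 * D 1 + (-1) * A 0 * A 0 * B 1 * C 1 * C 1 + (-1) * A 0 * A 0 * B 1 * B 1 * D 1 + 1 * A 0 * A 0 * B 1 * B 1 * C 1)
        ((-2) * B 1 * C 0 * C 1 * D 0 * D 0 + 2 * B 1 * C 0 * C 0 * D 0 * D 1 + (-1) * B 1 * B 1 * C 0 * D 0 * D 0 + 1 * B 1 * B 1 * C 0 * C 0 * D 0 + 1 * B 0 * C 1 * C 1 * D 0 * D 0 + (-1) * B 0 * C 0 * C 0 * D 1 * D 1 + 2 * B 0 * B 1 * C 1 * D 0 * D 0 + (-2) * B 0 * B 1 * C 0 * C 0 * D 1 + (-2) * B 0 * B 0 * C 1 * D 0 * D 1 + (-1) * B 0 * B 0 * C 1 * C 1 * D 0 + 1 * B 0 * B 0 * C 0 * D 1 * D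 1 + 2 * B 0 * B 0 * C 0 * C 1 * D 1 + 2 * A 1 * C 0 * C 1 * D 0 * D 0 + (-2) * A 1 * C 0 * C 0 * D 0 * D 1 + (-2) * A 1 * B 0 * B 1 * D 0 * D 0 + 2 * A 1 * B 0 * B 1 * C 0 * C 0 + 2 * A 1 * B 0 * B 0 * D 0 * D 1 + (-2) * A 1 * B 0 * B 0 * C 0 * C 1 + 1 * A 1 * A 1 * C 0 * D 0 * D 0 + (-1) * A 1 * A 1 * C 0 * C 0 * D 0 + (-1) * A 1 * A 1 * B 0 * D 0 * D 0 + 1 * A 1 * A 1 * B 0 * C 0 * C 0 + 1 * A 1 * A 1 * B 0 * B 0 * D 0 + (-1) * A 1 * A 1 * B 0 * B 0 * C 0 + (-1) * A 0 * C 1 * C 1 * D 0 * D 0 + 1 * A 0 * C 0 * C 0 * D 1 * D 1 + 1 * A 0 * B 1 * B 1 * D 0 * D 0 + (-1) * A 0 * B 1 * B 1 * C 0 * C 0 + (-1) * A 0 * B 0 * B 0 * D 1 * D 1 + 1 * A 0 * B 0 * B 0 * C 1 * C 1 + (-2) * A 0 * A 1 * C 1 * D 0 * D 0 + 2 * A 0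 * A 1 * C 0 * C 0 * D 1 + 2 * A 0 * A 1 * B 1 * D 0 * D 0 + (-2) * A 0 * A 1 * B 1 * C 0 * C 0 + (-2) * A 0 * A 1 * B 0 * B 0 * D 1 + 2 * A 0 * A 1 * B 0 * B 0 * C 1 + 2 * A 0 * A 0 * C 1 * D 0 * D 1 + 1 * A 0 * A 0 * C 1 * C 1 * D 0 + (-1) * A 0 * A 0 * C 0 * D 1 * D 1 + (-2) * A 0 * A 0 * C 0 * C 1 * D 1 + (-2) * A 0 * A 0 * B 1 * D 0 * D 1 + 2 * A 0 * A 0 * B 1 * C 0 * C 1 + (-1) * A 0 * A 0 * B 1 * B 1 * D 0 + 1 * A 0 * A 0 * B 1 * B 1 * C 0 + 1 * A 0 * A 0 * B 0 * D 1 * D 1 + (-1) * A 0 * A 0 * B 0 * C 1 * C 1 + 2 * A 0 * A 0 * B 0 * B 1 * D 1 + (-2) * A 0 * A 0 * B 0 * B 1 * C 1)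
        (1 * B 1 * B 1 * C 0 * C 1 * D 0 * D 0 + (-1) * B 1 * B 1 * C 0 * C 0 * D 0 * D 1 + (-1) * B 0 * B 1 * C 1 * C 1 * D 0 * D 0 + 1 * B 0 * B 1 * C 0 * C 0 * D 1 * D 1 + 1 * B 0 * B 0 * C 1 * C 1 * D 0 * D 1 + (-1) * B 0 * B 0 * C 0 * C 1 * D 1 * D 1 + (-1) * A 1 * A 1 * C 0 * C 1 * D 0 * D 0 + 1 * A 1 * A 1 * C 0 * C 0 * D 0 * D 1 + 1 * A 1 * A 1 * B 0 * B 1 * D 0 * D 0 + (-1) * A 1 * A 1 * B 0 * B 1 * C 0 * C 0 + (-1) * A 1 * A 1 * B 0 * B 0 * D 0 * D 1 + 1 * A 1 * A 1 * B 0 * B 0 * C 0 * C 1 + 1 * A 0 * A 1 * C 1 * C 1 * D 0 * D 0 + (-1) * A 0 * A 1 * C 0 * C 0 * D 1 * D 1 + (-1) * A 0 * A 1 * B 1 * B 1 * D 0 * D 0 + 1 * A 0 * A 1 * B 1 * B 1 * C 0 * C 0 + 1 * A 0 * A 1 * B 0 * B 0 * D 1 * D 1 + (-1) * A 0 * A 1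 * B 0 * B 0 * C 1 * C 1 + (-1) * A 0 * A 0 * C 1 * C 1 * D 0 * D 1 + 1 * A 0 * A 0 * C 0 * C 1 * D 1 * D 1 + 1 * A 0 * A 0 * B 1 * B 1 * D 0 * D 1 + (-1) * A 0 * A 0 * B 1 * B 1 * C 0 * C 1 + (-1) * A 0 * A 0 * B 0 * B 1 * D 1 * D 1 + 1 * A 0 * A 0 * B 0 * B 1 * C 1 * C 1) p * (a' ^ 2 + b' ^ 2 + c' ^ 2 + f' ^ 2) = 0 := by
      simp only [conicEval]
      linear_combination ((-1) * C 1 * D 1 * D 1 * p 0 * a' + (-2) * C 1 * D 0 * p 1 * p 1 * a' + 4 * C 1 * D 0 * p 0 * p 1 * b' + (-2) * C 1 * D 0 * p 0 * p 0 * c' + 2 * C 1 * D 0 * D 1 * p 1 * a' + (-2) * C 1 * D 0 * D 0 * p 1 * b' + 1 * C 1 * D 0 * D 0 * p 0 * c' + 1 * C 1 * C 1 * D 1 * p 0 * a' + 1 * C 1 * C 1 * D 0 * p 1 * a' + (-2) * C 1 * C 1 * D 0 * p 0 * b' + (-1) * C 1 * C 1 * D 0 * D 1 * a' + 1 * C 1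 * C 1 * D 0 * D 0 * b' + 2 * C 0 * D 1 * p 1 * p 1 * a' + (-4) * C 0 * D 1 * p 0 * p 1 * b' + 2 * C 0 * D 1 * p 0 * p 0 * c' + (-1) * C 0 * D 1 * D 1 * p 1 * a' + 2 * C 0 * D 1 * D 1 * p 0 * b' + (-2) * C 0 * D 0 * D 1 * p 0 * c' + 1 * C 0 * D 0 * D 0 * p 1 * c' + (-2) * C 0 * C 1 * D 1 * p 1 * a' + 1 * C 0 * C 1 * D 1 * D 1 * a' + 2 * C 0 * C 1 * D 0 * p 0 * c' + (-1) * C 0 * C 1 * D 0 * D 0 * c' + 2 * C 0 * C 0 * D 1 * p 1 * b' + (-1) * C 0 * C 0 * D 1 * p 0 * c' + (-1) * C 0 * C 0 * D 1 * D 1 * b' + (-1) * C 0 * C 0 * D 0 * p 1 * c' + 1 * C 0 * C 0 * D 0 * D 1 * c' + 1 * B 1 * D 1 * D 1 * p 0 * a' + 2 * B 1 * D 0 * p 1 * p 1 * a' + (-4) * B 1 * D 0 * p 0 * p 1 * b' + 2 * B 1 * D 0 * p 0 * p 0 * c' + (-2) * B 1 * D 0 * D 1 * p 1 * a' + 2 *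 B 1 * D 0 * D 0 * p 1 * b' + (-1) * B 1 * D 0 * D 0 * p 0 * c' + (-1) * B 1 * C 1 * C 1 * p 0 * a' + (-2) * B 1 * C 1 * C 1 * D 0 * p 0 * p 0 * f' + 1 * B 1 * C 1 * C 1 * D 0 * D 0 * p 0 * f' + (-2) * B 1 * C 0 * p 1 * p 1 * a' + 4 * B 1 * C 0 * p 0 * p 1 * b' + (-2) * B 1 * C 0 * p 0 * p 0 * c' + 2 * B 1 * C 0 * D 1 * D 1 * p 0 * p 0 * f' + (-4) * B 1 * C 0 * D 0 * D 1 * p 0 * p 1 * f' + 2 * B 1 * C 0 * D 0 * D 0 * p 1 * p 1 * f' + 2 * B 1 * C 0 * C 1 * p 1 * a' + 4 * B 1 * C 0 * C 1 * D 0 * p 0 * p 1 * f' + (-2) * B 1 * C 0 * C 1 * D 0 * D 0 * p 1 * f' + (-2) * B 1 * C 0 * C 0 * p 1 * b' + 1 * B 1 * C 0 * C 0 * p 0 * c' + (-1) * B 1 * C 0 * C 0 * D 1 * D 1 * p 0 * f' + (-2) * B 1 * C 0 * C 0 * D 0 * p 1 * p 1 * f' + 2 * B 1 * C 0 * C 0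 * D 0 * D 1 * p 1 * f' + (-1) * B 1 * B 1 * D 1 * p 0 * a' + (-1) * B 1 * B 1 * D 0 * p 1 * a' + 2 * B 1 * B 1 * D 0 * p 0 * b' + 1 * B 1 * B 1 * D 0 * D 1 * a' + (-1) * B 1 * B 1 * D 0 * D 0 * b' + 1 * B 1 * B 1 * C 1 * p 0 * a' + 2 * B 1 * B 1 * C 1 * D 0 * p 0 * p 0 * f' + (-1) * B 1 * B 1 * C 1 * D 0 * D 0 * p 0 * f' + 1 * B 1 * B 1 * C 0 * p 1 * a' + (-2) * B 1 * B 1 * C 0 * p 0 * b' + (-2) * B 1 * B 1 * C 0 * D 1 * p 0 * p 0 * f' + 2 * B 1 * B 1 * C 0 * D 0 * D 1 * p 0 * f' + (-1) * B 1 * B 1 * C 0 * D 0 * D 0 * p 1 * f' + (-1) * B 1 * B 1 * C 0 * C 1 * a' + (-2) * B 1 * B 1 * C 0 * C 1 * D 0 * p 0 * f' + 1 * B 1 * B 1 * C 0 * C 1 * D 0 * D 0 * f' + 1 * B 1 * B 1 * C 0 * C 0 * b' + 1 * B 1 * B 1 * C 0 * C 0 * D 1 * p 0 * f' + 1 * B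 1 * B 1 * C 0 * C 0 * D 0 * p 1 * f' + (-1) * B 1 * B 1 * C 0 * C 0 * D 0 * D 1 * f' + (-2) * B 0 * D 1 * p 1 * p 1 * a' + 4 * B 0 * D 1 * p 0 * p 1 * b' + (-2) * B 0 * D 1 * p 0 * p 0 * c' + 1 * B 0 * D 1 * D 1 * p 1 * a' + (-2) * B 0 * D 1 * D 1 * p 0 * b' + 2 * B 0 * D 0 * D 1 * p 0 * c' + (-1) * B 0 * D 0 * D 0 * p 1 * c' + 2 * B 0 * C 1 * p 1 * p 1 * a' + (-4) * B 0 * C 1 * p 0 * p 1 * b' + 2 * B 0 * C 1 * p 0 * p 0 * c' + (-2) * B 0 * C 1 * D 1 * D 1 * p 0 * p 0 * f' + 4 * B 0 * C 1 * D 0 * D 1 * p 0 * p 1 * f' + (-2) * B 0 * C 1 * D 0 * D 0 * p 1 * p 1 * f' + (-1) * B 0 * C 1 * C 1 * p 1 * a' + 2 * B 0 * C 1 * C 1 * p 0 * b' + 2 * B 0 * C 1 * C 1 * D 1 * p 0 * p 0 * f' + (-2) * B 0 * C 1 * C 1 * D 0 * D 1 * p 0 * f' + 1 * B 0 * C 1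 * C 1 * D 0 * D 0 * p 1 * f' + (-2) * B 0 * C 0 * C 1 * p 0 * c' + (-4) * B 0 * C 0 * C 1 * D 1 * p 0 * p 1 * f' + 2 * B 0 * C 0 * C 1 * D 1 * D 1 * p 0 * f' + 1 * B 0 * C 0 * C 0 * p 1 * c' + 2 * B 0 * C 0 * C 0 * D 1 * p 1 * p 1 * f' + (-1) * B 0 * C 0 * C 0 * D 1 * D 1 * p 1 * f' + 2 * B 0 * B 1 * D 1 * p 1 * a' + (-1) * B 0 * B 1 * D 1 * D 1 * a' + (-2) * B 0 * B 1 * D 0 * p 0 * c' + 1 * B 0 * B 1 * D 0 * D 0 * c' + (-2) * B 0 * B 1 * C 1 * p 1 * a' + (-4) * B 0 * B 1 * C 1 * D 0 * p 0 * p 1 * f' + 2 * B 0 * B 1 * C 1 * D 0 * D 0 * p 1 * f' + 1 * B 0 * B 1 * C 1 * C 1 * a' + 2 * B 0 * B 1 * C 1 * C 1 * D 0 * p 0 * f' + (-1) * B 0 * B 1 * C 1 * C 1 * D 0 * D 0 * f' + 2 * B 0 * B 1 * C 0 * p 0 * c' + 4 * B 0 * B 1 * C 0 * D 1 * p 0 *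 p 1 * f' + (-2) * B 0 * B 1 * C 0 * D 1 * D 1 * p 0 * f' + (-1) * B 0 * B 1 * C 0 * C 0 * c' + (-2) * B 0 * B 1 * C 0 * C 0 * D 1 * p 1 * f' + 1 * B 0 * B 1 * C 0 * C 0 * D 1 * D 1 * f' + (-2) * B 0 * B 0 * D 1 * p 1 * b' + 1 * B 0 * B 0 * D 1 * p 0 * c' + 1 * B 0 * B 0 * D 1 * D 1 * b' + 1 * B 0 * B 0 * D 0 * p 1 * c' + (-1) * B 0 * B 0 * D 0 * D 1 * c' + 2 * B 0 * B 0 * C 1 * p 1 * b' + (-1) * B 0 * B 0 * C 1 * p 0 * c' + 1 * B 0 * B 0 * C 1 * D 1 * D 1 * p 0 * f' + 2 * B 0 * B 0 * C 1 * D 0 * p 1 * p 1 * f' + (-2) * B 0 * B 0 * C 1 * D 0 * D 1 * p 1 * f' + (-1) * B 0 * B 0 * C 1 * C 1 * b' + (-1) * B 0 * B 0 * C 1 * C 1 * D 1 * p 0 * f' + (-1) * B 0 * B 0 * C 1 * C 1 * D 0 * p 1 * f' + 1 * B 0 * B 0 * C 1 * C 1 * D 0 * D 1 * f' + (-1) *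 B 0 * B 0 * C 0 * p 1 * c' + (-2) * B 0 * B 0 * C 0 * D 1 * p 1 * p 1 * f' + 1 * B 0 * B 0 * C 0 * D 1 * D 1 * p 1 * f' + 1 * B 0 * B 0 * C 0 * C 1 * c' + 2 * B 0 * B 0 * C 0 * C 1 * D 1 * p 1 * f' + (-1) * B 0 * B 0 * C 0 * C 1 * D 1 * D 1 * f') * hqA' +
        (1 * C 1 * D 1 * D 1 * p 0 * a' + 2 * C 1 * D 0 * p 1 * p 1 * a' + (-4) * C 1 * D 0 * p 0 * p 1 * b' + 2 * C 1 * D 0 * p 0 * p 0 * c' + (-2) * C 1 * D 0 * D 1 * p 1 * a' + 2 * C 1 * D 0 * D 0 * p 1 * b' + (-1) * C 1 * D 0 * D 0 * p 0 * c' + (-1) * C 1 * C 1 * D 1 * p 0 * a' + (-1) * C 1 * C 1 * D 0 * p 1 * a' + 2 * C 1 * C 1 * D 0 * p 0 * b' + 1 * C 1 * C 1 * D 0 * D 1 * a' + (-1) * C 1 * C 1 * D 0 * D 0 * b' + (-2) * C 0 * D 1 * p 1 * p 1 * a' + 4 * C 0 * D 1 * p 0 * p 1 * b' + (-2) * C 0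 * D 1 * p 0 * p 0 * c' + 1 * C 0 * D 1 * D 1 * p 1 * a' + (-2) * C 0 * D 1 * D 1 * p 0 * b' + 2 * C 0 * D 0 * D 1 * p 0 * c' + (-1) * C 0 * D 0 * D 0 * p 1 * c' + 2 * C 0 * C 1 * D 1 * p 1 * a' + (-1) * C 0 * C 1 * D 1 * D 1 * a' + (-2) * C 0 * C 1 * D 0 * p 0 * c' + 1 * C 0 * C 1 * D 0 * D 0 * c' + (-2) * C 0 * C 0 * D 1 * p 1 * b' + 1 * C 0 * C 0 * D 1 * p 0 * c' + 1 * C 0 * C 0 * D 1 * D 1 * b' + 1 * C 0 * C 0 * D 0 * p 1 * c' + (-1) * C 0 * C 0 * D 0 * D 1 * c' + (-1) * A 1 * D 1 * D 1 * p 0 * a' + (-2) * A 1 * D 0 * p 1 * p 1 * a' + 4 * A 1 * D 0 * p 0 * p 1 * b' + (-2) * A 1 * D 0 * p 0 * p 0 * c' + 2 * A 1 * D 0 * D 1 * p 1 * a' + (-2) * A 1 * D 0 * D 0 * p 1 * b' + 1 * A 1 * D 0 * D 0 * p 0 * c' + 1 * A 1 * C 1 * C 1 * p 0 * a' + 2 *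 A 1 * C 1 * C 1 * D 0 * p 0 * p 0 * f' + (-1) * A 1 * C 1 * C 1 * D 0 * D 0 * p 0 * f' + 2 * A 1 * C 0 * p 1 * p 1 * a' + (-4) * A 1 * C 0 * p 0 * p 1 * b' + 2 * A 1 * C 0 * p 0 * p 0 * c' + (-2) * A 1 * C 0 * D 1 * D 1 * p 0 * p 0 * f' + 4 * A 1 * C 0 * D 0 * D 1 * p 0 * p 1 * f' + (-2) * A 1 * C 0 * D 0 * D 0 * p 1 * p 1 * f' + (-2) * A 1 * C 0 * C 1 * p 1 * a' + (-4) * A 1 * C 0 * C 1 * D 0 * p 0 * p 1 * f' + 2 * A 1 * C 0 * C 1 * D 0 * D 0 * p 1 * f' + 2 * A 1 * C 0 * C 0 * p 1 * b' + (-1) * A 1 * C 0 * C 0 * p 0 * c' + 1 * A 1 * C 0 * C 0 * D 1 * D 1 * p 0 * f' + 2 * A 1 * C 0 * C 0 * D 0 * p 1 * p 1 * f' + (-2) * A 1 * C 0 * C 0 * D 0 * D 1 * p 1 * f' + 1 * A 1 * A 1 * D 1 * p 0 * a' + 1 * A 1 * A 1 * D 0 * p 1 * a' + (-2) * A 1 *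 A 1 * D 0 * p 0 * b' + (-1) * A 1 * A 1 * D 0 * D 1 * a' + 1 * A 1 * A 1 * D 0 * D 0 * b' + (-1) * A 1 * A 1 * C 1 * p 0 * a' + (-2) * A 1 * A 1 * C 1 * D 0 * p 0 * p 0 * f' + 1 * A 1 * A 1 * C 1 * D 0 * D 0 * p 0 * f' + (-1) * A 1 * A 1 * C 0 * p 1 * a' + 2 * A 1 * A 1 * C 0 * p 0 * b' + 2 * A 1 * A 1 * C 0 * D 1 * p 0 * p 0 * f' + (-2) * A 1 * A 1 * C 0 * D 0 * D 1 * p 0 * f' + 1 * A 1 * A 1 * C 0 * D 0 * D 0 * p 1 * f' + 1 * A 1 * A 1 * C 0 * C 1 * a' + 2 * A 1 * A 1 * C 0 * C 1 * D 0 * p 0 * f' + (-1) * A 1 * A 1 * C 0 * C 1 * D 0 * D 0 * f' + (-1) * A 1 * A 1 * C 0 * C 0 * b' + (-1) * A 1 * A 1 * C 0 * C 0 * D 1 * p 0 * f' + (-1) * A 1 * A 1 * C 0 * C 0 * D 0 * p 1 * f' + 1 * A 1 * A 1 * C 0 * C 0 * D 0 * D 1 * f' + 2 * A 0 * D 1 *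 p 1 * p 1 * a' + (-4) * A 0 * D 1 * p 0 * p 1 * b' + 2 * A 0 * D 1 * p 0 * p 0 * c' + (-1) * A 0 * D 1 * D 1 * p 1 * a' + 2 * A 0 * D 1 * D 1 * p 0 * b' + (-2) * A 0 * D 0 * D 1 * p 0 * c' + 1 * A 0 * D 0 * D 0 * p 1 * c' + (-2) * A 0 * C 1 * p 1 * p 1 * a' + 4 * A 0 * C 1 * p 0 * p 1 * b' + (-2) * A 0 * C 1 * p 0 * p 0 * c' + 2 * A 0 * C 1 * D 1 * D 1 * p 0 * p 0 * f' + (-4) * A 0 * C 1 * D 0 * D 1 * p 0 * p 1 * f' + 2 * A 0 * C 1 * D 0 * D 0 * p 1 * p 1 * f' + 1 * A 0 * C 1 * C 1 * p 1 * a' + (-2) * A 0 * C 1 * C 1 * p 0 * b' + (-2) * A 0 * C 1 * C 1 * D 1 * p 0 * p 0 * f' + 2 * A 0 * C 1 * C 1 * D 0 * D 1 * p 0 * f' + (-1) * A 0 * C 1 * C 1 * D 0 * D 0 * p 1 * f' + 2 * A 0 * C 0 * C 1 * p 0 * c' + 4 * A 0 * C 0 * C 1 * D 1 * p 0 * p 1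 * f' + (-2) * A 0 * C 0 * C 1 * D 1 * D 1 * p 0 * f' + (-1) * A 0 * C 0 * C 0 * p 1 * c' + (-2) * A 0 * C 0 * C 0 * D 1 * p 1 * p 1 * f' + 1 * A 0 * C 0 * C 0 * D 1 * D 1 * p 1 * f' + (-2) * A 0 * A 1 * D 1 * p 1 * a' + 1 * A 0 * A 1 * D 1 * D 1 * a' + 2 * A 0 * A 1 * D 0 * p 0 * c' + (-1) * A 0 * A 1 * D 0 * D 0 * c' + 2 * A 0 * A 1 * C 1 * p 1 * a' + 4 * A 0 * A 1 * C 1 * D 0 * p 0 * p 1 * f' + (-2) * A 0 * A 1 * C 1 * D 0 * D 0 * p 1 * f' + (-1) * A 0 * A 1 * C 1 * C 1 * a' + (-2) * A 0 * A 1 * C 1 * C 1 * D 0 * p 0 * f' + 1 * A 0 * A 1 * C 1 * C 1 * D 0 * D 0 * f' + (-2) * A 0 * A 1 * C 0 * p 0 * c' + (-4) * A 0 * A 1 * C 0 * D 1 * p 0 * p 1 * f' + 2 * A 0 * A 1 * C 0 * D 1 * D 1 * p 0 * f' + 1 * A 0 * A 1 * C 0 * C 0 * c' + 2 * A 0 *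 A 1 * C 0 * C 0 * D 1 * p 1 * f' + (-1) * A 0 * A 1 * C 0 * C 0 * D 1 * D 1 * f' + 2 * A 0 * A 0 * D 1 * p 1 * b' + (-1) * A 0 * A 0 * D 1 * p 0 * c' + (-1) * A 0 * A 0 * D 1 * D 1 * b' + (-1) * A 0 * A 0 * D 0 * p 1 * c' + 1 * A 0 * A 0 * D 0 * D 1 * c' + (-2) * A 0 * A 0 * C 1 * p 1 * b' + 1 * A 0 * A 0 * C 1 * p 0 * c' + (-1) * A 0 * A 0 * C 1 * D 1 * D 1 * p 0 * f' + (-2) * A 0 * A 0 * C 1 * D 0 * p 1 * p 1 * f' + 2 * A 0 * A 0 * C 1 * D 0 * D 1 * p 1 * f' + 1 * A 0 * A 0 * C 1 * C 1 * b' + 1 * A 0 * A 0 * C 1 * C 1 * D 1 * p 0 * f' + 1 * A 0 * A 0 * C 1 * C 1 * D 0 * p 1 * f' + (-1) * A 0 * A 0 * C 1 * C 1 * D 0 * D 1 * f' + 1 * A 0 * A 0 * C 0 * p 1 * c' + 2 * A 0 * A 0 * C 0 * D 1 * p 1 * p 1 * f' + (-1) * A 0 * A 0 * C 0 * D 1 *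 D 1 * p 1 * f' + (-1) * A 0 * A 0 * C 0 * C 1 * c' + (-2) * A 0 * A 0 * C 0 * C 1 * D 1 * p 1 * f' + 1 * A 0 * A 0 * C 0 * C 1 * D 1 * D 1 * f') * hqB' +
        ((-1) * B 1 * D 1 * D 1 * p 0 * a' + (-2) * B 1 * D 0 * p 1 * p 1 * a' + 4 * B 1 * D 0 * p 0 * p 1 * b' + (-2) * B 1 * D 0 * p 0 * p 0 * c' + 2 * B 1 * D 0 * D 1 * p 1 * a' + (-2) * B 1 * D 0 * D 0 * p 1 * b' + 1 * B 1 * D 0 * D 0 * p 0 * c' + 1 * B 1 * B 1 * D 1 * p 0 * a' + 1 * B 1 * B 1 * D 0 * p 1 * a' + (-2) * B 1 * B 1 * D 0 * p 0 * b' + (-1) * B 1 * B 1 * D 0 * D 1 * a' + 1 * B 1 * B 1 * D 0 * D 0 * b' + 2 * B 0 * D 1 * p 1 * p 1 * a' + (-4) * B 0 * D 1 * p 0 * p 1 * b' + 2 * B 0 * D 1 * p 0 * p 0 * c' + (-1) * B 0 * D 1 * D 1 * p 1 * a' + 2 * B 0 * D 1 * D 1 * p 0 * b' + (-2) * B 0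 * D 0 * D 1 * p 0 * c' + 1 * B 0 * D 0 * D 0 * p 1 * c' + (-2) * B 0 * B 1 * D 1 * p 1 * a' + 1 * B 0 * B 1 * D 1 * D 1 * a' + 2 * B 0 * B 1 * D 0 * p 0 * c' + (-1) * B 0 * B 1 * D 0 * D 0 * c' + 2 * B 0 * B 0 * D 1 * p 1 * b' + (-1) * B 0 * B 0 * D 1 * p 0 * c' + (-1) * B 0 * B 0 * D 1 * D 1 * b' + (-1) * B 0 * B 0 * D 0 * p 1 * c' + 1 * B 0 * B 0 * D 0 * D 1 * c' + 1 * A 1 * D 1 * D 1 * p 0 * a' + 2 * A 1 * D 0 * p 1 * p 1 * a' + (-4) * A 1 * D 0 * p 0 * p 1 * b' + 2 * A 1 * D 0 * p 0 * p 0 * c' + (-2) * A 1 * D 0 * D 1 * p 1 * a' + 2 * A 1 * D 0 * D 0 * p 1 * b' + (-1) * A 1 * D 0 * D 0 * p 0 * c' + (-1) * A 1 * B 1 * B 1 * p 0 * a' + (-2) * A 1 * B 1 * B 1 * D 0 * p 0 * p 0 * f' + 1 * A 1 * B 1 * B 1 * D 0 * D 0 * p 0 * f' + (-2) * A 1 *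 B 0 * p 1 * p 1 * a' + 4 * A 1 * B 0 * p 0 * p 1 * b' + (-2) * A 1 * B 0 * p 0 * p 0 * c' + 2 * A 1 * B 0 * D 1 * D 1 * p 0 * p 0 * f' + (-4) * A 1 * B 0 * D 0 * D 1 * p 0 * p 1 * f' + 2 * A 1 * B 0 * D 0 * D 0 * p 1 * p 1 * f' + 2 * A 1 * B 0 * B 1 * p 1 * a' + 4 * A 1 * B 0 * B 1 * D 0 * p 0 * p 1 * f' + (-2) * A 1 * B 0 * B 1 * D 0 * D 0 * p 1 * f' + (-2) * A 1 * B 0 * B 0 * p 1 * b' + 1 * A 1 * B 0 * B 0 * p 0 * c' + (-1) * A 1 * B 0 * B 0 * D 1 * D 1 * p 0 * f' + (-2) * A 1 * B 0 * B 0 * D 0 * p 1 * p 1 * f' + 2 * A 1 * B 0 * B 0 * D 0 * D 1 * p 1 * f' + (-1) * A 1 * A 1 * D 1 * p 0 * a' + (-1) * A 1 * A 1 * D 0 * p 1 * a' + 2 * A 1 * A 1 * D 0 * p 0 * b' + 1 * A 1 * A 1 * D 0 * D 1 * a' + (-1) * A 1 * A 1 * D 0 * D 0 * b' + 1 * A 1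 * A 1 * B 1 * p 0 * a' + 2 * A 1 * A 1 * B 1 * D 0 * p 0 * p 0 * f' + (-1) * A 1 * A 1 * B 1 * D 0 * D 0 * p 0 * f' + 1 * A 1 * A 1 * B 0 * p 1 * a' + (-2) * A 1 * A 1 * B 0 * p 0 * b' + (-2) * A 1 * A 1 * B 0 * D 1 * p 0 * p 0 * f' + 2 * A 1 * A 1 * B 0 * D 0 * D 1 * p 0 * f' + (-1) * A 1 * A 1 * B 0 * D 0 * D 0 * p 1 * f' + (-1) * A 1 * A 1 * B 0 * B 1 * a' + (-2) * A 1 * A 1 * B 0 * B 1 * D 0 * p 0 * f' + 1 * A 1 * A 1 * B 0 * B 1 * D 0 * D 0 * f' + 1 * A 1 * A 1 * B 0 * B 0 * b' + 1 * A 1 * A 1 * B 0 * B 0 * D 1 * p 0 * f' + 1 * A 1 * A 1 * B 0 * B 0 * D 0 * p 1 * f' + (-1) * A 1 * A 1 * B 0 * B 0 * D 0 * D 1 * f' + (-2) * A 0 * D 1 * p 1 * p 1 * a' + 4 * A 0 * D 1 * p 0 * p 1 * b' + (-2) * A 0 * D 1 * p 0 * p 0 * c' + 1 * A 0 * D 1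 * D 1 * p 1 * a' + (-2) * A 0 * D 1 * D 1 * p 0 * b' + 2 * A 0 * D 0 * D 1 * p 0 * c' + (-1) * A 0 * D 0 * D 0 * p 1 * c' + 2 * A 0 * B 1 * p 1 * p 1 * a' + (-4) * A 0 * B 1 * p 0 * p 1 * b' + 2 * A 0 * B 1 * p 0 * p 0 * c' + (-2) * A 0 * B 1 * D 1 * D 1 * p 0 * p 0 * f' + 4 * A 0 * B 1 * D 0 * D 1 * p 0 * p 1 * f' + (-2) * A 0 * B 1 * D 0 * D 0 * p 1 * p 1 * f' + (-1) * A 0 * B 1 * B 1 * p 1 * a' + 2 * A 0 * B 1 * B 1 * p 0 * b' + 2 * A 0 * B 1 * B 1 * D 1 * p 0 * p 0 * f' + (-2) * A 0 * B 1 * B 1 * D 0 * D 1 * p 0 * f' + 1 * A 0 * B 1 * B 1 * D 0 * D 0 * p 1 * f' + (-2) * A 0 * B 0 * B 1 * p 0 * c' + (-4) * A 0 * B 0 * B 1 * D 1 * p 0 * p 1 * f' + 2 * A 0 * B 0 * B 1 * D 1 * D 1 * p 0 * f' + 1 * A 0 * B 0 * B 0 * p 1 * c' + 2 * A 0 * B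 0 * B 0 * D 1 * p 1 * p 1 * f' + (-1) * A 0 * B 0 * B 0 * D 1 * D 1 * p 1 * f' + 2 * A 0 * A 1 * D 1 * p 1 * a' + (-1) * A 0 * A 1 * D 1 * D 1 * a' + (-2) * A 0 * A 1 * D 0 * p 0 * c' + 1 * A 0 * A 1 * D 0 * D 0 * c' + (-2) * A 0 * A 1 * B 1 * p 1 * a' + (-4) * A 0 * A 1 * B 1 * D 0 * p 0 * p 1 * f' + 2 * A 0 * A 1 * B 1 * D 0 * D 0 * p 1 * f' + 1 * A 0 * A 1 * B 1 * B 1 * a' + 2 * A 0 * A 1 * B 1 * B 1 * D 0 * p 0 * f' + (-1) * A 0 * A 1 * B 1 * B 1 * D 0 * D 0 * f' + 2 * A 0 * A 1 * B 0 * p 0 * c' + 4 * A 0 * A 1 * B 0 * D 1 * p 0 * p 1 * f' + (-2) * A 0 * A 1 * B 0 * D 1 * D 1 * p 0 * f' + (-1) * A 0 * A 1 * B 0 * B 0 * c' + (-2) * A 0 * A 1 * B 0 * B 0 * D 1 * p 1 * f' + 1 * A 0 * A 1 * B 0 * B 0 * D 1 * D 1 * f' + (-2) * A 0 * A 0 *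 D 1 * p 1 * b' + 1 * A 0 * A 0 * D 1 * p 0 * c' + 1 * A 0 * A 0 * D 1 * D 1 * b' + 1 * A 0 * A 0 * D 0 * p 1 * c' + (-1) * A 0 * A 0 * D 0 * D 1 * c' + 2 * A 0 * A 0 * B 1 * p 1 * b' + (-1) * A 0 * A 0 * B 1 * p 0 * c' + 1 * A 0 * A 0 * B 1 * D 1 * D 1 * p 0 * f' + 2 * A 0 * A 0 * B 1 * D 0 * p 1 * p 1 * f' + (-2) * A 0 * A 0 * B 1 * D 0 * D 1 * p 1 * f' + (-1) * A 0 * A 0 * B 1 * B 1 * b' + (-1) * A 0 * A 0 * B 1 * B 1 * D 1 * p 0 * f' + (-1) * A 0 * A 0 * B 1 * B 1 * D 0 * p 1 * f' + 1 * A 0 * A 0 * B 1 * B 1 * D 0 * D 1 * f' + (-1) * A 0 * A 0 * B 0 * p 1 * c' + (-2) * A 0 * A 0 * B 0 * D 1 * p 1 * p 1 * f' + 1 * A 0 * A 0 * B 0 * D 1 * D 1 * p 1 * f' + 1 * A 0 * A 0 * B 0 * B 1 * c' + 2 * A 0 * A 0 * B 0 * B 1 * D 1 * p 1 * f' + (-1)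 * A 0 * A 0 * B 0 * B 1 * D 1 * D 1 * f') * hqC' +
        (1 * B 1 * C 1 * C 1 * p 0 * a' + 2 * B 1 * C 0 * p 1 * p 1 * a' + (-4) * B 1 * C 0 * p 0 * p 1 * b' + 2 * B 1 * C 0 * p 0 * p 0 * c' + (-2) * B 1 * C 0 * C 1 * p 1 * a' + 2 * B 1 * C 0 * C 0 * p 1 * b' + (-1) * B 1 * C 0 * C 0 * p 0 * c' + (-1) * B 1 * B 1 * C 1 * p 0 * a' + (-1) * B 1 * B 1 * C 0 * p 1 * a' + 2 * B 1 * B 1 * C 0 * p 0 * b' + 1 * B 1 * B 1 * C 0 * C 1 * a' + (-1) * B 1 * B 1 * C 0 * C 0 * b' + (-2) * B 0 * C 1 * p 1 * p 1 * a' + 4 * B 0 * C 1 * p 0 * p 1 * b' + (-2) * B 0 * C 1 * p 0 * p 0 * c' + 1 * B 0 * C 1 * C 1 * p 1 * a' + (-2) * B 0 * C 1 * C 1 * p 0 * b' + 2 * B 0 * C 0 * C 1 * p 0 * c' + (-1) * B 0 * C 0 * C 0 * p 1 * c' + 2 * B 0 * B 1 * C 1 * p 1 * a' + (-1) * B 0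 * B 1 * C 1 * C 1 * a' + (-2) * B 0 * B 1 * C 0 * p 0 * c' + 1 * B 0 * B 1 * C 0 * C 0 * c' + (-2) * B 0 * B 0 * C 1 * p 1 * b' + 1 * B 0 * B 0 * C 1 * p 0 * c' + 1 * B 0 * B 0 * C 1 * C 1 * b' + 1 * B 0 * B 0 * C 0 * p 1 * c' + (-1) * B 0 * B 0 * C 0 * C 1 * c' + (-1) * A 1 * C 1 * C 1 * p 0 * a' + (-2) * A 1 * C 0 * p 1 * p 1 * a' + 4 * A 1 * C 0 * p 0 * p 1 * b' + (-2) * A 1 * C 0 * p 0 * p 0 * c' + 2 * A 1 * C 0 * C 1 * p 1 * a' + (-2) * A 1 * C 0 * C 0 * p 1 * b' + 1 * A 1 * C 0 * C 0 * p 0 * c' + 1 * A 1 * B 1 * B 1 * p 0 * a' + 2 * A 1 * B 1 * B 1 * C 0 * p 0 * p 0 * f' + (-1) * A 1 * B 1 * B 1 * C 0 * C 0 * p 0 * f' + 2 * A 1 * B 0 * p 1 * p 1 * a' + (-4) * A 1 * B 0 * p 0 * p 1 * b' + 2 * A 1 * B 0 * p 0 * p 0 * c' + (-2) * A 1 * B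 0 * C 1 * C 1 * p 0 * p 0 * f' + 4 * A 1 * B 0 * C 0 * C 1 * p 0 * p 1 * f' + (-2) * A 1 * B 0 * C 0 * C 0 * p 1 * p 1 * f' + (-2) * A 1 * B 0 * B 1 * p 1 * a' + (-4) * A 1 * B 0 * B 1 * C 0 * p 0 * p 1 * f' + 2 * A 1 * B 0 * B 1 * C 0 * C 0 * p 1 * f' + 2 * A 1 * B 0 * B 0 * p 1 * b' + (-1) * A 1 * B 0 * B 0 * p 0 * c' + 1 * A 1 * B 0 * B 0 * C 1 * C 1 * p 0 * f' + 2 * A 1 * B 0 * B 0 * C 0 * p 1 * p 1 * f' + (-2) * A 1 * B 0 * B 0 * C 0 * C 1 * p 1 * f' + 1 * A 1 * A 1 * C 1 * p 0 * a' + 1 * A 1 * A 1 * C 0 * p 1 * a' + (-2) * A 1 * A 1 * C 0 * p 0 * b' + (-1) * A 1 * A 1 * C 0 * C 1 * a' + 1 * A 1 * A 1 * C 0 * C 0 * b' + (-1) * A 1 * A 1 * B 1 * p 0 * a' + (-2) * A 1 * A 1 * B 1 * C 0 * p 0 * p 0 * f' + 1 * A 1 * A 1 * B 1 * C 0 * C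 0 * p 0 * f' + (-1) * A 1 * A 1 * B 0 * p 1 * a' + 2 * A 1 * A 1 * B 0 * p 0 * b' + 2 * A 1 * A 1 * B 0 * C 1 * p 0 * p 0 * f' + (-2) * A 1 * A 1 * B 0 * C 0 * C 1 * p 0 * f' + 1 * A 1 * A 1 * B 0 * C 0 * C 0 * p 1 * f' + 1 * A 1 * A 1 * B 0 * B 1 * a' + 2 * A 1 * A 1 * B 0 * B 1 * C 0 * p 0 * f' + (-1) * A 1 * A 1 * B 0 * B 1 * C 0 * C 0 * f' + (-1) * A 1 * A 1 * B 0 * B 0 * b' + (-1) * A 1 * A 1 * B 0 * B 0 * C 1 * p 0 * f' + (-1) * A 1 * A 1 * B 0 * B 0 * C 0 * p 1 * f' + 1 * A 1 * A 1 * B 0 * B 0 * C 0 * C 1 * f' + 2 * A 0 * C 1 * p 1 * p 1 * a' + (-4) * A 0 * C 1 * p 0 * p 1 * b' + 2 * A 0 * C 1 * p 0 * p 0 * c' + (-1) * A 0 * C 1 * C 1 * p 1 * a' + 2 * A 0 * C 1 * C 1 * p 0 * b' + (-2) * A 0 * C 0 * C 1 * p 0 * c' + 1 * A 0 * C 0 *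 C 0 * p 1 * c' + (-2) * A 0 * B 1 * p 1 * p 1 * a' + 4 * A 0 * B 1 * p 0 * p 1 * b' + (-2) * A 0 * B 1 * p 0 * p 0 * c' + 2 * A 0 * B 1 * C 1 * C 1 * p 0 * p 0 * f' + (-4) * A 0 * B 1 * C 0 * C 1 * p 0 * p 1 * f' + 2 * A 0 * B 1 * C 0 * C 0 * p 1 * p 1 * f' + 1 * A 0 * B 1 * B 1 * p 1 * a' + (-2) * A 0 * B 1 * B 1 * p 0 * b' + (-2) * A 0 * B 1 * B 1 * C 1 * p 0 * p 0 * f' + 2 * A 0 * B 1 * B 1 * C 0 * C 1 * p 0 * f' + (-1) * A 0 * B 1 * B 1 * C 0 * C 0 * p 1 * f' + 2 * A 0 * B 0 * B 1 * p 0 * c' + 4 * A 0 * B 0 * B 1 * C 1 * p 0 * p 1 * f' + (-2) * A 0 * B 0 * B 1 * C 1 * C 1 * p 0 * f' + (-1) * A 0 * B 0 * B 0 * p 1 * c' + (-2) * A 0 * B 0 * B 0 * C 1 * p 1 * p 1 * f' + 1 * A 0 * B 0 * B 0 * C 1 * C 1 * p 1 * f' + (-2) * A 0 * A 1 * C 1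 * p 1 * a' + 1 * A 0 * A 1 * C 1 * C 1 * a' + 2 * A 0 * A 1 * C 0 * p 0 * c' + (-1) * A 0 * A 1 * C 0 * C 0 * c' + 2 * A 0 * A 1 * B 1 * p 1 * a' + 4 * A 0 * A 1 * B 1 * C 0 * p 0 * p 1 * f' + (-2) * A 0 * A 1 * B 1 * C 0 * C 0 * p 1 * f' + (-1) * A 0 * A 1 * B 1 * B 1 * a' + (-2) * A 0 * A 1 * B 1 * B 1 * C 0 * p 0 * f' + 1 * A 0 * A 1 * B 1 * B 1 * C 0 * C 0 * f' + (-2) * A 0 * A 1 * B 0 * p 0 * c' + (-4) * A 0 * A 1 * B 0 * C 1 * p 0 * p 1 * f' + 2 * A 0 * A 1 * B 0 * C 1 * C 1 * p 0 * f' + 1 * A 0 * A 1 * B 0 * B 0 * c' + 2 * A 0 * A 1 * B 0 * B 0 * C 1 * p 1 * f' + (-1) * A 0 * A 1 * B 0 * B 0 * C 1 * C 1 * f' + 2 * A 0 * A 0 * C 1 * p 1 * b' + (-1) * A 0 * A 0 * C 1 * p 0 * c' + (-1) * A 0 * A 0 * C 1 * C 1 * b' + (-1) * A 0 * A 0 *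 C 0 * p 1 * c' + 1 * A 0 * A 0 * C 0 * C 1 * c' + (-2) * A 0 * A 0 * B 1 * p 1 * b' + 1 * A 0 * A 0 * B 1 * p 0 * c' + (-1) * A 0 * A 0 * B 1 * C 1 * C 1 * p 0 * f' + (-2) * A 0 * A 0 * B 1 * C 0 * p 1 * p 1 * f' + 2 * A 0 * A 0 * B 1 * C 0 * C 1 * p 1 * f' + 1 * A 0 * A 0 * B 1 * B 1 * b' + 1 * A 0 * A 0 * B 1 * B 1 * C 1 * p 0 * f' + 1 * A 0 * A 0 * B 1 * B 1 * C 0 * p 1 * f' + (-1) * A 0 * A 0 * B 1 * B 1 * C 0 * C 1 * f' + 1 * A 0 * A 0 * B 0 * p 1 * c' + 2 * A 0 * A 0 * B 0 * C 1 * p 1 * p 1 * f' + (-1) * A 0 * A 0 * B 0 * C 1 * C 1 * p 1 * f' + (-1) * A 0 * A 0 * B 0 * B 1 * c' + (-2) * A 0 * A 0 * B 0 * B 1 * C 1 * p 1 * f' + 1 * A 0 * A 0 * B 0 * B 1 * C 1 * C 1 * f') * hqD'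
    exact (mul_eq_zero.mp key).resolve_right hS
end

section
/- Let A, B, C, D ∈ ℝ² be four points, no three collinear, lying on a common circle, and such that each pair of opposite sides is non-parallel, with diagonal points A₁ = AD ∩ BC, B₁ = AB ∩ CD, C₁ = AC ∩ BD. Then there exists a nonzero real polynomial q(x, y) = a·x² + b·x·y + c·y² + d·x + e·y + f with a + c = 0 vanishing at the six midpoints of the segments AB, AC, AD, BC, BD, CD and at A₁, B₁, C₁; that is, for a quadrangle inscribed in a circle the nine-point conic is an equilateral (rectangular) hyperbola. -/
lemma pt_ext {P Q : EuclideanSpace ℝ (Fin 2)} (h0 : P 0 = Q 0) (h1 : P 1 = Q 1) : P = Q := by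
  ext i
  fin_cases i <;> assumption

lemma comp_eval (r : ℝ) (U P : EuclideanSpace ℝ (Fin 2)) (i : Fin 2) :
    (r • (U -ᵥ P) +ᵥ P) i = r * (U i - P i) + P i := by
  simp [vsub_eq_sub, vadd_eq_add, PiLp.add_apply, PiLp.sub_apply, PiLp.smul_apply, smul_eq_mul]

lemma param_of_mem {X P Q : EuclideanSpace ℝ (Fin 2)} (h : X ∈ line[ℝ, P, Q]) :
    ∃ r : ℝ, X 0 = r * (Q 0 - P 0) + P 0 ∧ X 1 = r * (Q 1 - P 1) + P 1 := by
  have hv : X -ᵥ P ∈ vectorSpan ℝ ({P, Q} : Set (EuclideanSpace ℝ (Fin 2))) := by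
    rw [← direction_affineSpan]
    exact AffineSubspace.vsub_mem_direction h (left_mem_affineSpan_pair ℝ P Q)
  obtain ⟨r, hr⟩ := mem_vectorSpan_pair_rev.mp hv
  have h0 := congrArg (fun v : EuclideanSpace ℝ (Fin 2) => v 0) hr
  have h1 := congrArg (fun v : EuclideanSpace ℝ (Fin 2) => v 1) hr
  simp only [vsub_eq_sub, PiLp.sub_apply, PiLp.smul_apply, smul_eq_mul] at h0 h1
  exact ⟨r, by linarith, by linarith⟩

lemma cross_ne_zero (P Q S : EuclideanSpace ℝ (Fin 2)) (h : AffineIndependent ℝ ![P, Q, S]) :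
    (Q 0 - P 0) * (S 1 - P 1) - (Q 1 - P 1) * (S 0 - P 0) ≠ 0 := by
  intro hz
  rw [affineIndependent_iff_not_collinear_set] at h
  apply h
  rw [collinear_iff_of_mem (Set.mem_insert P {Q, S})]
  by_cases hQP : Q 0 - P 0 = 0 ∧ Q 1 - P 1 = 0
  · refine ⟨S -ᵥ P, ?_⟩
    intro x hx
    simp only [Set.mem_insert_iff, Set.mem_singleton_iff] at hx
    rcases hx with h' | h' | h'
    · refine ⟨0, ?_⟩
      rw [h']
      refine pt_ext ?_ ?_ <;> rw [comp_eval] <;> ring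
    · refine ⟨0, ?_⟩
      rw [h']
      refine pt_ext ?_ ?_ <;> rw [comp_eval]
      · linarith [hQP.1]
      · linarith [hQP.2]
    · refine ⟨1, ?_⟩
      rw [h']
      refine pt_ext ?_ ?_ <;> rw [comp_eval] <;> ring
  · refine ⟨Q -ᵥ P, ?_⟩
    intro x hx
    simp only [Set.mem_insert_iff, Set.mem_singleton_iff] at hx
    rcases hx with h' | h' | h'
    · refine ⟨0, ?_⟩
      rw [h']
      refine pt_ext ?_ ?_ <;> rw [comp_eval] <;> ring
    · refine ⟨1, ?_⟩
      rw [h']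
      refine pt_ext ?_ ?_ <;> rw [comp_eval] <;> ring
    · by_cases h0 : Q 0 - P 0 = 0
      · have h1 : Q 1 - P 1 ≠ 0 := fun hh => hQP ⟨h0, hh⟩
        have hS0 : S 0 - P 0 = 0 := mul_left_cancel₀ h1 (by
          rw [mul_zero]; linear_combination -hz + (S 1 - P 1) * h0)
        refine ⟨(S 1 - P 1) / (Q 1 - P 1), ?_⟩
        rw [h']
        refine pt_ext ?_ ?_
        · rw [comp_eval, h0, mul_zero, zero_add]; linarith [hS0]
        · rw [comp_eval, div_mul_cancel₀ _ h1]; ring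
      · refine ⟨(S 0 - P 0) / (Q 0 - P 0), ?_⟩
        rw [h']
        refine pt_ext ?_ ?_
        · rw [comp_eval, div_mul_cancel₀ _ h0]; ring
        · rw [comp_eval]
          field_simp
          linear_combination hz

set_option maxHeartbeats 4000000 in
/-- For a complete quadrangle inscribed in a circle, the nine-point conic is an equilateral
(rectangular) hyperbola: there is a nonzero polynomial `a·x² + b·x·y + c·y² + d·x + e·y + f`
with `a + c = 0` vanishing at the six side midpoints and the three diagonal points. -/
theorem nine_point_conic_of_cyclic_quadrangle_is_rectangular
    (A B C D A₁ B₁ C₁ : EuclideanSpace ℝ (Fin 2))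
    (h1 : AffineIndependent ℝ ![A, B, C])
    (h2 : AffineIndependent ℝ ![A, B, D])
    (h3 : AffineIndependent ℝ ![A, C, D])
    (h4 : AffineIndependent ℝ ![B, C, D])
    -- the four points lie on a common circle
    (hcyc : ∃ (O : EuclideanSpace ℝ (Fin 2)) (R : ℝ),
      dist O A = R ∧ dist O B = R ∧ dist O C = R ∧ dist O D = R)
    (hpar1 : ¬ AffineSubspace.Parallel line[ℝ, A, B] line[ℝ, C, D])
    (hpar2 : ¬ AffineSubspace.Parallel line[ℝ, A, C] line[ℝ, B, D])
    (hpar3 : ¬ AffineSubspace.Parallel line[ℝ, A, D] line[ℝ, B, C])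
    (hA₁1 : A₁ ∈ line[ℝ, A, D]) (hA₁2 : A₁ ∈ line[ℝ, B, C])
    (hB₁1 : B₁ ∈ line[ℝ, A, B]) (hB₁2 : B₁ ∈ line[ℝ, C, D])
    (hC₁1 : C₁ ∈ line[ℝ, A, C]) (hC₁2 : C₁ ∈ line[ℝ, B, D]) :
    ∃ a b c d e f : ℝ, (a, b, c, d, e, f) ≠ (0, 0, 0, 0, 0, 0) ∧ a + c = 0 ∧
      conicEval a b c d e f (midpoint ℝ A B) = 0 ∧
      conicEval a b c d e f (midpoint ℝ A C) = 0 ∧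
      conicEval a b c d e f (midpoint ℝ A D) = 0 ∧
      conicEval a b c d e f (midpoint ℝ B C) = 0 ∧
      conicEval a b c d e f (midpoint ℝ B D) = 0 ∧
      conicEval a b c d e f (midpoint ℝ C D) = 0 ∧
      conicEval a b c d e f A₁ = 0 ∧
      conicEval a b c d e f B₁ = 0 ∧
      conicEval a b c d e f C₁ = 0 := by
  obtain ⟨O, R, hOA, hOB, hOC, hOD⟩ := hcyc
  have sq : ∀ X : EuclideanSpace ℝ (Fin 2), dist O X = R →
      (O 0 - X 0) ^ 2 + (O 1 - X 1) ^ 2 = R ^ 2 := by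
    intro X h
    rw [← h, EuclideanSpace.dist_eq, Real.sq_sqrt (by positivity)]
    simp [Fin.sum_univ_two, Real.dist_eq, sq_abs]
  have dA := sq A hOA
  have dB := sq B hOB
  have dC := sq C hOC
  have dD := sq D hOD
  have mape : ∀ X Y : EuclideanSpace ℝ (Fin 2), ∀ i : Fin 2,
      midpoint ℝ X Y i = (X i + Y i) / 2 := by
    intro X Y i
    rw [show midpoint ℝ X Y i = midpoint ℝ (X i) (Y i) from rfl, midpoint_eq_smul_add,
      smul_eq_mul]
    have h2 : (⅟2 : ℝ) = 1/2 := by norm_num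
    rw [h2]
    ring
  obtain ⟨sA, eA0, eA1⟩ := param_of_mem hA₁1
  obtain ⟨tA, fA0, fA1⟩ := param_of_mem hA₁2
  obtain ⟨sB, eB0, eB1⟩ := param_of_mem hB₁1
  obtain ⟨tB, fB0, fB1⟩ := param_of_mem hB₁2
  obtain ⟨sC, eC0, eC1⟩ := param_of_mem hC₁1
  obtain ⟨tC, fC0, fC1⟩ := param_of_mem hC₁2
  have hlA : (A 0 + sA * (D 0 - A 0) - B 0) * (C 1 - B 1)
      - (A 1 + sA * (D 1 - A 1) - B 1) * (C 0 - B 0) = 0 := by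
    linear_combination (C 1 - B 1) * fA0 - (C 1 - B 1) * eA0 - (C 0 - B 0) * fA1
      + (C 0 - B 0) * eA1
  have hlB : (A 0 + sB * (B 0 - A 0) - C 0) * (D 1 - C 1)
      - (A 1 + sB * (B 1 - A 1) - C 1) * (D 0 - C 0) = 0 := by
    linear_combination (D 1 - C 1) * fB0 - (D 1 - C 1) * eB0 - (D 0 - C 0) * fB1
      + (D 0 - C 0) * eB1
  have hlC : (A 0 + sC * (C 0 - A 0) - B 0) * (D 1 - B 1)
      - (A 1 + sC * (C 1 - A 1) - B 1) * (D 0 - B 0) = 0 := by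
    linear_combination (D 1 - B 1) * fC0 - (D 1 - B 1) * eC0 - (D 0 - B 0) * fC1
      + (D 0 - B 0) * eC1
  refine ⟨((2:ℝ) * (B 1) * (C 1) * (C 1) * (D 0) + (-2:ℝ) * (B 1) * (C 0) * (D 1) * (D 1) + (-2:ℝ) * (B 1) * (B 1) * (C 1) * (D 0) + (2:ℝ) * (B 1) * (B 1) * (C 0) * (D 1) + (2:ℝ) * (B 0) * (C 1) * (D 1) * (D 1) + (-2:ℝ) * (B 0) * (C 1) * (C 1) * (D 1) + (-2:ℝ) * (A 1) * (C 1) * (C 1) * (D 0) + (2:ℝ) * (A 1) * (C 0) * (D 1) * (D 1) + (2:ℝ) * (A 1) * (B 1) * (B 1) * (D 0) + (-2:ℝ) * (A 1) * (B 1) * (B 1) * (C 0) + (-2:ℝ) * (A 1) * (B 0) * (D 1) * (D 1) + (2:ℝ) * (A 1) * (B 0) * (C 1) * (C 1) + (2:ℝ) * (A 1) * (A 1) * (C 1) * (D 0) + (-2:ℝ) * (A 1) * (A 1) * (C 0) * (D 1) + (-2:ℝ) * (A 1) * (A 1) * (B 1) * (D 0) + (2:ℝ) * (A 1) * (A 1)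 * (B 1) * (C 0) + (2:ℝ) * (A 1) * (A 1) * (B 0) * (D 1) + (-2:ℝ) * (A 1) * (A 1) * (B 0) * (C 1) + (-2:ℝ) * (A 0) * (C 1) * (D 1) * (D 1) + (2:ℝ) * (A 0) * (C 1) * (C 1) * (D 1) + (2:ℝ) * (A 0) * (B 1) * (D 1) * (D 1) + (-2:ℝ) * (A 0) * (B 1) * (C 1) * (C 1) + (-2:ℝ) * (A 0) * (B 1) * (B 1) * (D 1) + (2:ℝ) * (A 0) * (B 1) * (B 1) * (C 1)), ((4:ℝ) * (B 1) * (C 0) * (D 0) * (D 1) + (-4:ℝ) * (B 1) * (C 0) * (C 1) * (D 0) + (-4:ℝ) * (B 0) * (C 1) * (D 0) * (D 1) + (4:ℝ) * (B 0) * (C 0) * (C 1) * (D 1) + (4:ℝ) * (B 0) * (B 1) * (C 1) * (D 0) + (-4:ℝ) * (B 0) * (B 1) * (C 0) * (D 1) + (-4:ℝ) * (A 1) * (C 0) * (D 0) * (D 1) + (4:ℝ) * (A 1) * (C 0) * (C 1) * (D 0) + (4:ℝ) * (A 1) * (B 0) * (D 0) * (D 1) + (-4:ℝ) * (A 1) *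 (B 0) * (C 0) * (C 1) + (-4:ℝ) * (A 1) * (B 0) * (B 1) * (D 0) + (4:ℝ) * (A 1) * (B 0) * (B 1) * (C 0) + (4:ℝ) * (A 0) * (C 1) * (D 0) * (D 1) + (-4:ℝ) * (A 0) * (C 0) * (C 1) * (D 1) + (-4:ℝ) * (A 0) * (B 1) * (D 0) * (D 1) + (4:ℝ) * (A 0) * (B 1) * (C 0) * (C 1) + (4:ℝ) * (A 0) * (B 0) * (B 1) * (D 1) + (-4:ℝ) * (A 0) * (B 0) * (B 1) * (C 1) + (-4:ℝ) * (A 0) * (A 1) * (C 1) * (D 0) + (4:ℝ) * (A 0) * (A 1) * (C 0) * (D 1) + (4:ℝ) * (A 0) * (A 1) * (B 1) * (D 0) + (-4:ℝ) * (A 0) * (A 1) * (B 1) * (C 0) + (-4:ℝ) * (A 0) * (A 1) * (B 0) * (D 1) + (4:ℝ) * (A 0) * (A 1) * (B 0) * (C 1)), ((-2:ℝ) * (B 1) * (C 0) * (D 0) * (D 0) + (2:ℝ) * (B 1) * (C 0) * (C 0) * (D 0) + (2:ℝ) * (B 0) * (C 1) * (D 0) * (D 0) + (-2:ℝ) * (B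 0) * (C 0) * (C 0) * (D 1) + (-2:ℝ) * (B 0) * (B 0) * (C 1) * (D 0) + (2:ℝ) * (B 0) * (B 0) * (C 0) * (D 1) + (2:ℝ) * (A 1) * (C 0) * (D 0) * (D 0) + (-2:ℝ) * (A 1) * (C 0) * (C 0) * (D 0) + (-2:ℝ) * (A 1) * (B 0) * (D 0) * (D 0) + (2:ℝ) * (A 1) * (B 0) * (C 0) * (C 0) + (2:ℝ) * (A 1) * (B 0) * (B 0) * (D 0) + (-2:ℝ) * (A 1) * (B 0) * (B 0) * (C 0) + (-2:ℝ) * (A 0) * (C 1) * (D 0) * (D 0) + (2:ℝ) * (A 0) * (C 0) * (C 0) * (D 1) + (2:ℝ) * (A 0) * (B 1) * (D 0) * (D 0) + (-2:ℝ) * (A 0) * (B 1) * (C 0) * (C 0) + (-2:ℝ) * (A 0) * (B 0) * (B 0) * (D 1) + (2:ℝ) * (A 0) * (B 0) * (B 0) * (C 1) + (2:ℝ) * (A 0) * (A 0) * (C 1) * (D 0) + (-2:ℝ) * (A 0) * (A 0) * (C 0) * (D 1) + (-2:ℝ) * (A 0) * (A 0) * (B 1) * (D 0) + (2:ℝ)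 * (A 0) * (A 0) * (B 1) * (C 0) + (2:ℝ) * (A 0) * (A 0) * (B 0) * (D 1) + (-2:ℝ) * (A 0) * (A 0) * (B 0) * (C 1)), ((-1:ℝ) * (B 1) * (C 1) * (C 1) * (D 0) * (D 0) + (B 1) * (C 0) * (C 0) * (D 1) * (D 1) + (B 1) * (B 1) * (C 1) * (D 0) * (D 0) + (-2:ℝ) * (B 1) * (B 1) * (C 0) * (D 0) * (D 1) + (2:ℝ) * (B 1) * (B 1) * (C 0) * (C 1) * (D 0) + (-1:ℝ) * (B 1) * (B 1) * (C 0) * (C 0) * (D 1) + (2:ℝ) * (B 0) * (C 1) * (C 1) * (D 0) * (D 1) + (-2:ℝ) * (B 0) * (C 0) * (C 1) * (D 1) * (D 1) + (-2:ℝ) * (B 0) * (B 1) * (C 1) * (C 1) * (D 0) + (2:ℝ) * (B 0) * (B 1) * (C 0) * (D 1) * (D 1) + (-1:ℝ) * (B 0) * (B 0) * (C 1) * (D 1) * (D 1) + (B 0) * (B 0) * (C 1) * (C 1) * (D 1) + (A 1) * (C 1) * (C 1) * (D 0) * (D 0) + (-1:ℝ) * (A 1) * (C 0) * (C 0) * (D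 1) * (D 1) + (-1:ℝ) * (A 1) * (B 1) * (B 1) * (D 0) * (D 0) + (A 1) * (B 1) * (B 1) * (C 0) * (C 0) + (A 1) * (B 0) * (B 0) * (D 1) * (D 1) + (-1:ℝ) * (A 1) * (B 0) * (B 0) * (C 1) * (C 1) + (-1:ℝ) * (A 1) * (A 1) * (C 1) * (D 0) * (D 0) + (2:ℝ) * (A 1) * (A 1) * (C 0) * (D 0) * (D 1) + (-2:ℝ) * (A 1) * (A 1) * (C 0) * (C 1) * (D 0) + (A 1) * (A 1) * (C 0) * (C 0) * (D 1) + (A 1) * (A 1) * (B 1) * (D 0) * (D 0) + (-1:ℝ) * (A 1) * (A 1) * (B 1) * (C 0) * (C 0) + (-2:ℝ) * (A 1) * (A 1) * (B 0) * (D 0) * (D 1) + (2:ℝ) * (A 1) * (A 1) * (B 0) * (C 0) * (C 1) + (2:ℝ) * (A 1) * (A 1) * (B 0) * (B 1) * (D 0) + (-2:ℝ) * (A 1) * (A 1) * (B 0) * (B 1) * (C 0) + (-1:ℝ) * (A 1) * (A 1) * (B 0) * (B 0) * (D 1) + (A 1) * (A 1) * (B 0) * (B 0) * (C 1) + (-2:ℝ)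 * (A 0) * (C 1) * (C 1) * (D 0) * (D 1) + (2:ℝ) * (A 0) * (C 0) * (C 1) * (D 1) * (D 1) + (2:ℝ) * (A 0) * (B 1) * (B 1) * (D 0) * (D 1) + (-2:ℝ) * (A 0) * (B 1) * (B 1) * (C 0) * (C 1) + (-2:ℝ) * (A 0) * (B 0) * (B 1) * (D 1) * (D 1) + (2:ℝ) * (A 0) * (B 0) * (B 1) * (C 1) * (C 1) + (2:ℝ) * (A 0) * (A 1) * (C 1) * (C 1) * (D 0) + (-2:ℝ) * (A 0) * (A 1) * (C 0) * (D 1) * (D 1) + (-2:ℝ) * (A 0) * (A 1) * (B 1) * (B 1) * (D 0) + (2:ℝ) * (A 0) * (A 1) * (B 1) * (B 1) * (C 0) + (2:ℝ) * (A 0) * (A 1) * (B 0) * (D 1) * (D 1) + (-2:ℝ) * (A 0) * (A 1) * (B 0) * (C 1) * (C 1) + (A 0) * (A 0) * (C 1) * (D 1) * (D 1) + (-1:ℝ) * (A 0) * (A 0) * (C 1) * (C 1) * (D 1) + (-1:ℝ) * (A 0) * (A 0) * (B 1) * (D 1) * (D 1) + (A 0) * (A 0) * (B 1) * (C 1) *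 (C 1) + (A 0) * (A 0) * (B 1) * (B 1) * (D 1) + (-1:ℝ) * (A 0) * (A 0) * (B 1) * (B 1) * (C 1)), ((2:ℝ) * (B 1) * (C 0) * (C 1) * (D 0) * (D 0) + (-2:ℝ) * (B 1) * (C 0) * (C 0) * (D 0) * (D 1) + (B 1) * (B 1) * (C 0) * (D 0) * (D 0) + (-1:ℝ) * (B 1) * (B 1) * (C 0) * (C 0) * (D 0) + (-1:ℝ) * (B 0) * (C 1) * (C 1) * (D 0) * (D 0) + (B 0) * (C 0) * (C 0) * (D 1) * (D 1) + (-2:ℝ) * (B 0) * (B 1) * (C 1) * (D 0) * (D 0) + (2:ℝ) * (B 0) * (B 1) * (C 0) * (C 0) * (D 1) + (2:ℝ) * (B 0) * (B 0) * (C 1) * (D 0) * (D 1) + (B 0) * (B 0) * (C 1) * (C 1) * (D 0) + (-1:ℝ) * (B 0) * (B 0) * (C 0) * (D 1) * (D 1) + (-2:ℝ) * (B 0) * (B 0) * (C 0) * (C 1) * (D 1) + (-2:ℝ) * (A 1) * (C 0) * (C 1) * (D 0) * (D 0) + (2:ℝ) * (A 1) * (C 0) * (C 0) * (D 0) * (D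 1) + (2:ℝ) * (A 1) * (B 0) * (B 1) * (D 0) * (D 0) + (-2:ℝ) * (A 1) * (B 0) * (B 1) * (C 0) * (C 0) + (-2:ℝ) * (A 1) * (B 0) * (B 0) * (D 0) * (D 1) + (2:ℝ) * (A 1) * (B 0) * (B 0) * (C 0) * (C 1) + (-1:ℝ) * (A 1) * (A 1) * (C 0) * (D 0) * (D 0) + (A 1) * (A 1) * (C 0) * (C 0) * (D 0) + (A 1) * (A 1) * (B 0) * (D 0) * (D 0) + (-1:ℝ) * (A 1) * (A 1) * (B 0) * (C 0) * (C 0) + (-1:ℝ) * (A 1) * (A 1) * (B 0) * (B 0) * (D 0) + (A 1) * (A 1) * (B 0) * (B 0) * (C 0) + (A 0) * (C 1) * (C 1) * (D 0) * (D 0) + (-1:ℝ) * (A 0) * (C 0) * (C 0) * (D 1) * (D 1) + (-1:ℝ) * (A 0) * (B 1) * (B 1) * (D 0) * (D 0) + (A 0) * (B 1) * (B 1) * (C 0) * (C 0) + (A 0) * (B 0) * (B 0) * (D 1) * (D 1) + (-1:ℝ) * (A 0) * (B 0) * (B 0) * (C 1) * (C 1) + (2:ℝ) * (A 0) * (A 1)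 * (C 1) * (D 0) * (D 0) + (-2:ℝ) * (A 0) * (A 1) * (C 0) * (C 0) * (D 1) + (-2:ℝ) * (A 0) * (A 1) * (B 1) * (D 0) * (D 0) + (2:ℝ) * (A 0) * (A 1) * (B 1) * (C 0) * (C 0) + (2:ℝ) * (A 0) * (A 1) * (B 0) * (B 0) * (D 1) + (-2:ℝ) * (A 0) * (A 1) * (B 0) * (B 0) * (C 1) + (-2:ℝ) * (A 0) * (A 0) * (C 1) * (D 0) * (D 1) + (-1:ℝ) * (A 0) * (A 0) * (C 1) * (C 1) * (D 0) + (A 0) * (A 0) * (C 0) * (D 1) * (D 1) + (2:ℝ) * (A 0) * (A 0) * (C 0) * (C 1) * (D 1) + (2:ℝ) * (A 0) * (A 0) * (B 1) * (D 0) * (D 1) + (-2:ℝ) * (A 0) * (A 0) * (B 1) * (C 0) * (C 1) + (A 0) * (A 0) * (B 1) * (B 1) * (D 0) + (-1:ℝ) * (A 0) * (A 0) * (B 1) * (B 1) * (C 0) + (-1:ℝ) * (A 0) * (A 0) * (B 0) * (D 1) * (D 1) + (A 0) * (A 0) * (B 0) * (C 1) * (C 1) + (-2:ℝ) * (A 0)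 * (A 0) * (B 0) * (B 1) * (D 1) + (2:ℝ) * (A 0) * (A 0) * (B 0) * (B 1) * (C 1)), ((-1:ℝ) * (B 1) * (B 1) * (C 0) * (C 1) * (D 0) * (D 0) + (B 1) * (B 1) * (C 0) * (C 0) * (D 0) * (D 1) + (B 0) * (B 1) * (C 1) * (C 1) * (D 0) * (D 0) + (-1:ℝ) * (B 0) * (B 1) * (C 0) * (C 0) * (D 1) * (D 1) + (-1:ℝ) * (B 0) * (B 0) * (C 1) * (C 1) * (D 0) * (D 1) + (B 0) * (B 0) * (C 0) * (C 1) * (D 1) * (D 1) + (A 1) * (A 1) * (C 0) * (C 1) * (D 0) * (D 0) + (-1:ℝ) * (A 1) * (A 1) * (C 0) * (C 0) * (D 0) * (D 1) + (-1:ℝ) * (A 1) * (A 1) * (B 0) * (B 1) * (D 0) * (D 0) + (A 1) * (A 1) * (B 0) * (B 1) * (C 0) * (C 0) + (A 1) * (A 1) * (B 0) * (B 0) * (D 0) * (D 1) + (-1:ℝ) * (A 1) * (A 1) * (B 0) * (B 0) * (C 0) * (C 1) + (-1:ℝ) * (A 0) * (A 1) * (C 1) * (C 1) * (D 0) * (D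 0) + (A 0) * (A 1) * (C 0) * (C 0) * (D 1) * (D 1) + (A 0) * (A 1) * (B 1) * (B 1) * (D 0) * (D 0) + (-1:ℝ) * (A 0) * (A 1) * (B 1) * (B 1) * (C 0) * (C 0) + (-1:ℝ) * (A 0) * (A 1) * (B 0) * (B 0) * (D 1) * (D 1) + (A 0) * (A 1) * (B 0) * (B 0) * (C 1) * (C 1) + (A 0) * (A 0) * (C 1) * (C 1) * (D 0) * (D 1) + (-1:ℝ) * (A 0) * (A 0) * (C 0) * (C 1) * (D 1) * (D 1) + (-1:ℝ) * (A 0) * (A 0) * (B 1) * (B 1) * (D 0) * (D 1) + (A 0) * (A 0) * (B 1) * (B 1) * (C 0) * (C 1) + (A 0) * (A 0) * (B 0) * (B 1) * (D 1) * (D 1) + (-1:ℝ) * (A 0) * (A 0) * (B 0) * (B 1) * (C 1) * (C 1)),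
    ?_, ?_, ?_, ?_, ?_, ?_, ?_, ?_, ?_, ?_, ?_⟩
  · intro hzero
    rw [Prod.mk.injEq, Prod.mk.injEq, Prod.mk.injEq, Prod.mk.injEq, Prod.mk.injEq] at hzero
    obtain ⟨za, zb, zc, zd, ze, zf⟩ := hzero
    have key : ((2:ℝ) * (B 1) * (C 1) * (C 1) * (D 0) + (-2:ℝ) * (B 1) * (C 0) * (D 1) * (D 1) + (-2:ℝ) * (B 1) * (B 1) * (C 1) * (D 0) + (2:ℝ) * (B 1) * (B 1) * (C 0) * (D 1) + (2:ℝ) * (B 0) * (C 1) * (D 1) * (D 1) + (-2:ℝ) * (B 0) * (C 1) * (C 1) * (D 1) + (-2:ℝ) * (A 1) * (C 1) * (C 1) * (D 0) + (2:ℝ) * (A 1) * (C 0) * (D 1) * (D 1) + (2:ℝ) * (A 1) * (B 1) * (B 1) * (D 0) + (-2:ℝ) * (A 1) * (B 1) * (B 1) * (C 0) + (-2:ℝ) * (A 1) * (B 0) * (D 1) * (D 1) + (2:ℝ) * (A 1) * (B 0) * (C 1) * (C 1) + (2:ℝ) * (A 1) * (A 1) * (C 1) * (D 0) + (-2:ℝ)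 * (A 1) * (A 1) * (C 0) * (D 1) + (-2:ℝ) * (A 1) * (A 1) * (B 1) * (D 0) + (2:ℝ) * (A 1) * (A 1) * (B 1) * (C 0) + (2:ℝ) * (A 1) * (A 1) * (B 0) * (D 1) + (-2:ℝ) * (A 1) * (A 1) * (B 0) * (C 1) + (-2:ℝ) * (A 0) * (C 1) * (D 1) * (D 1) + (2:ℝ) * (A 0) * (C 1) * (C 1) * (D 1) + (2:ℝ) * (A 0) * (B 1) * (D 1) * (D 1) + (-2:ℝ) * (A 0) * (B 1) * (C 1) * (C 1) + (-2:ℝ) * (A 0) * (B 1) * (B 1) * (D 1) + (2:ℝ) * (A 0) * (B 1) * (B 1) * (C 1)) * A 0 ^ 2 + ((4:ℝ) * (B 1) * (C 0) * (D 0) * (D 1) + (-4:ℝ) * (B 1) * (C 0) * (C 1) * (D 0) + (-4:ℝ) * (B 0) * (C 1) * (D 0) * (D 1) + (4:ℝ) * (B 0) * (C 0) * (C 1) * (D 1) + (4:ℝ) * (B 0) * (B 1) * (C 1) * (D 0) + (-4:ℝ) * (B 0) * (B 1) * (C 0) * (D 1) + (-4:ℝ) * (A 1) * (C 0) * (D 0)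 * (D 1) + (4:ℝ) * (A 1) * (C 0) * (C 1) * (D 0) + (4:ℝ) * (A 1) * (B 0) * (D 0) * (D 1) + (-4:ℝ) * (A 1) * (B 0) * (C 0) * (C 1) + (-4:ℝ) * (A 1) * (B 0) * (B 1) * (D 0) + (4:ℝ) * (A 1) * (B 0) * (B 1) * (C 0) + (4:ℝ) * (A 0) * (C 1) * (D 0) * (D 1) + (-4:ℝ) * (A 0) * (C 0) * (C 1) * (D 1) + (-4:ℝ) * (A 0) * (B 1) * (D 0) * (D 1) + (4:ℝ) * (A 0) * (B 1) * (C 0) * (C 1) + (4:ℝ) * (A 0) * (B 0) * (B 1) * (D 1) + (-4:ℝ) * (A 0) * (B 0) * (B 1) * (C 1) + (-4:ℝ) * (A 0) * (A 1) * (C 1) * (D 0) + (4:ℝ) * (A 0) * (A 1) * (C 0) * (D 1) + (4:ℝ) * (A 0) * (A 1) * (B 1) * (D 0) + (-4:ℝ) * (A 0) * (A 1) * (B 1) * (C 0) + (-4:ℝ) * (A 0) * (A 1) * (B 0) * (D 1) + (4:ℝ) * (A 0) * (A 1) * (B 0) * (C 1)) * A 0 * A 1 + ((-2:ℝ) * (B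 1) * (C 0) * (D 0) * (D 0) + (2:ℝ) * (B 1) * (C 0) * (C 0) * (D 0) + (2:ℝ) * (B 0) * (C 1) * (D 0) * (D 0) + (-2:ℝ) * (B 0) * (C 0) * (C 0) * (D 1) + (-2:ℝ) * (B 0) * (B 0) * (C 1) * (D 0) + (2:ℝ) * (B 0) * (B 0) * (C 0) * (D 1) + (2:ℝ) * (A 1) * (C 0) * (D 0) * (D 0) + (-2:ℝ) * (A 1) * (C 0) * (C 0) * (D 0) + (-2:ℝ) * (A 1) * (B 0) * (D 0) * (D 0) + (2:ℝ) * (A 1) * (B 0) * (C 0) * (C 0) + (2:ℝ) * (A 1) * (B 0) * (B 0) * (D 0) + (-2:ℝ) * (A 1) * (B 0) * (B 0) * (C 0) + (-2:ℝ) * (A 0) * (C 1) * (D 0) * (D 0) + (2:ℝ) * (A 0) * (C 0) * (C 0) * (D 1) + (2:ℝ) * (A 0) * (B 1) * (D 0) * (D 0) + (-2:ℝ) * (A 0) * (B 1) * (C 0) * (C 0) + (-2:ℝ) * (A 0) * (B 0) * (B 0) * (D 1) + (2:ℝ) * (A 0) * (B 0) * (B 0) * (C 1) + (2:ℝ) *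 (A 0) * (A 0) * (C 1) * (D 0) + (-2:ℝ) * (A 0) * (A 0) * (C 0) * (D 1) + (-2:ℝ) * (A 0) * (A 0) * (B 1) * (D 0) + (2:ℝ) * (A 0) * (A 0) * (B 1) * (C 0) + (2:ℝ) * (A 0) * (A 0) * (B 0) * (D 1) + (-2:ℝ) * (A 0) * (A 0) * (B 0) * (C 1)) * A 1 ^ 2
        + ((-1:ℝ) * (B 1) * (C 1) * (C 1) * (D 0) * (D 0) + (B 1) * (C 0) * (C 0) * (D 1) * (D 1) + (B 1) * (B 1) * (C 1) * (D 0) * (D 0) + (-2:ℝ) * (B 1) * (B 1) * (C 0) * (D 0) * (D 1) + (2:ℝ) * (B 1) * (B 1) * (C 0) * (C 1) * (D 0) + (-1:ℝ) * (B 1) * (B 1) * (C 0) * (C 0) * (D 1) + (2:ℝ) * (B 0) * (C 1) * (C 1) * (D 0) * (D 1) + (-2:ℝ) * (B 0) * (C 0) * (C 1) * (D 1) * (D 1) + (-2:ℝ) * (B 0) * (B 1) * (C 1) * (C 1) * (D 0) + (2:ℝ) * (B 0) * (B 1) * (C 0) * (D 1) * (D 1) + (-1:ℝ) * (B 0) *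 (B 0) * (C 1) * (D 1) * (D 1) + (B 0) * (B 0) * (C 1) * (C 1) * (D 1) + (A 1) * (C 1) * (C 1) * (D 0) * (D 0) + (-1:ℝ) * (A 1) * (C 0) * (C 0) * (D 1) * (D 1) + (-1:ℝ) * (A 1) * (B 1) * (B 1) * (D 0) * (D 0) + (A 1) * (B 1) * (B 1) * (C 0) * (C 0) + (A 1) * (B 0) * (B 0) * (D 1) * (D 1) + (-1:ℝ) * (A 1) * (B 0) * (B 0) * (C 1) * (C 1) + (-1:ℝ) * (A 1) * (A 1) * (C 1) * (D 0) * (D 0) + (2:ℝ) * (A 1) * (A 1) * (C 0) * (D 0) * (D 1) + (-2:ℝ) * (A 1) * (A 1) * (C 0) * (C 1) * (D 0) + (A 1) * (A 1) * (C 0) * (C 0) * (D 1) + (A 1) * (A 1) * (B 1) * (D 0) * (D 0) + (-1:ℝ) * (A 1) * (A 1) * (B 1) * (C 0) * (C 0) + (-2:ℝ) * (A 1) * (A 1) * (B 0) * (D 0) * (D 1) + (2:ℝ) * (A 1) * (A 1) * (B 0) * (C 0) * (C 1) + (2:ℝ) * (A 1) * (A 1) * (B 0) * (B 1) * (D 0)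 + (-2:ℝ) * (A 1) * (A 1) * (B 0) * (B 1) * (C 0) + (-1:ℝ) * (A 1) * (A 1) * (B 0) * (B 0) * (D 1) + (A 1) * (A 1) * (B 0) * (B 0) * (C 1) + (-2:ℝ) * (A 0) * (C 1) * (C 1) * (D 0) * (D 1) + (2:ℝ) * (A 0) * (C 0) * (C 1) * (D 1) * (D 1) + (2:ℝ) * (A 0) * (B 1) * (B 1) * (D 0) * (D 1) + (-2:ℝ) * (A 0) * (B 1) * (B 1) * (C 0) * (C 1) + (-2:ℝ) * (A 0) * (B 0) * (B 1) * (D 1) * (D 1) + (2:ℝ) * (A 0) * (B 0) * (B 1) * (C 1) * (C 1) + (2:ℝ) * (A 0) * (A 1) * (C 1) * (C 1) * (D 0) + (-2:ℝ) * (A 0) * (A 1) * (C 0) * (D 1) * (D 1) + (-2:ℝ) * (A 0) * (A 1) * (B 1) * (B 1) * (D 0) + (2:ℝ) * (A 0) * (A 1) * (B 1) * (B 1) * (C 0) + (2:ℝ) * (A 0) * (A 1) * (B 0) * (D 1) * (D 1) + (-2:ℝ) * (A 0) * (A 1) * (B 0) * (C 1) * (C 1) + (A 0) * (A 0) * (C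 1) * (D 1) * (D 1) + (-1:ℝ) * (A 0) * (A 0) * (C 1) * (C 1) * (D 1) + (-1:ℝ) * (A 0) * (A 0) * (B 1) * (D 1) * (D 1) + (A 0) * (A 0) * (B 1) * (C 1) * (C 1) + (A 0) * (A 0) * (B 1) * (B 1) * (D 1) + (-1:ℝ) * (A 0) * (A 0) * (B 1) * (B 1) * (C 1)) * A 0 + ((2:ℝ) * (B 1) * (C 0) * (C 1) * (D 0) * (D 0) + (-2:ℝ) * (B 1) * (C 0) * (C 0) * (D 0) * (D 1) + (B 1) * (B 1) * (C 0) * (D 0) * (D 0) + (-1:ℝ) * (B 1) * (B 1) * (C 0) * (C 0) * (D 0) + (-1:ℝ) * (B 0) * (C 1) * (C 1) * (D 0) * (D 0) + (B 0) * (C 0) * (C 0) * (D 1) * (D 1) + (-2:ℝ) * (B 0) * (B 1) * (C 1) * (D 0) * (D 0) + (2:ℝ) * (B 0) * (B 1) * (C 0) * (C 0) * (D 1) + (2:ℝ) * (B 0) * (B 0) * (C 1) * (D 0) * (D 1) + (B 0) * (B 0) * (C 1) * (C 1) * (D 0) + (-1:ℝ) * (B 0) * (B 0) * (C 0) * (D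 1) * (D 1) + (-2:ℝ) * (B 0) * (B 0) * (C 0) * (C 1) * (D 1) + (-2:ℝ) * (A 1) * (C 0) * (C 1) * (D 0) * (D 0) + (2:ℝ) * (A 1) * (C 0) * (C 0) * (D 0) * (D 1) + (2:ℝ) * (A 1) * (B 0) * (B 1) * (D 0) * (D 0) + (-2:ℝ) * (A 1) * (B 0) * (B 1) * (C 0) * (C 0) + (-2:ℝ) * (A 1) * (B 0) * (B 0) * (D 0) * (D 1) + (2:ℝ) * (A 1) * (B 0) * (B 0) * (C 0) * (C 1) + (-1:ℝ) * (A 1) * (A 1) * (C 0) * (D 0) * (D 0) + (A 1) * (A 1) * (C 0) * (C 0) * (D 0) + (A 1) * (A 1) * (B 0) * (D 0) * (D 0) + (-1:ℝ) * (A 1) * (A 1) * (B 0) * (C 0) * (C 0) + (-1:ℝ) * (A 1) * (A 1) * (B 0) * (B 0) * (D 0) + (A 1) * (A 1) * (B 0) * (B 0) * (C 0) + (A 0) * (C 1) * (C 1) * (D 0) * (D 0) + (-1:ℝ) * (A 0) * (C 0) * (C 0) * (D 1) * (D 1) + (-1:ℝ) * (A 0) * (B 1) * (B 1) * (D 0)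 * (D 0) + (A 0) * (B 1) * (B 1) * (C 0) * (C 0) + (A 0) * (B 0) * (B 0) * (D 1) * (D 1) + (-1:ℝ) * (A 0) * (B 0) * (B 0) * (C 1) * (C 1) + (2:ℝ) * (A 0) * (A 1) * (C 1) * (D 0) * (D 0) + (-2:ℝ) * (A 0) * (A 1) * (C 0) * (C 0) * (D 1) + (-2:ℝ) * (A 0) * (A 1) * (B 1) * (D 0) * (D 0) + (2:ℝ) * (A 0) * (A 1) * (B 1) * (C 0) * (C 0) + (2:ℝ) * (A 0) * (A 1) * (B 0) * (B 0) * (D 1) + (-2:ℝ) * (A 0) * (A 1) * (B 0) * (B 0) * (C 1) + (-2:ℝ) * (A 0) * (A 0) * (C 1) * (D 0) * (D 1) + (-1:ℝ) * (A 0) * (A 0) * (C 1) * (C 1) * (D 0) + (A 0) * (A 0) * (C 0) * (D 1) * (D 1) + (2:ℝ) * (A 0) * (A 0) * (C 0) * (C 1) * (D 1) + (2:ℝ) * (A 0) * (A 0) * (B 1) * (D 0) * (D 1) + (-2:ℝ) * (A 0) * (A 0) * (B 1) * (C 0) * (C 1) + (A 0) * (A 0) * (B 1) * (B 1) * (D 0)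 + (-1:ℝ) * (A 0) * (A 0) * (B 1) * (B 1) * (C 0) + (-1:ℝ) * (A 0) * (A 0) * (B 0) * (D 1) * (D 1) + (A 0) * (A 0) * (B 0) * (C 1) * (C 1) + (-2:ℝ) * (A 0) * (A 0) * (B 0) * (B 1) * (D 1) + (2:ℝ) * (A 0) * (A 0) * (B 0) * (B 1) * (C 1)) * A 1 + ((-1:ℝ) * (B 1) * (B 1) * (C 0) * (C 1) * (D 0) * (D 0) + (B 1) * (B 1) * (C 0) * (C 0) * (D 0) * (D 1) + (B 0) * (B 1) * (C 1) * (C 1) * (D 0) * (D 0) + (-1:ℝ) * (B 0) * (B 1) * (C 0) * (C 0) * (D 1) * (D 1) + (-1:ℝ) * (B 0) * (B 0) * (C 1) * (C 1) * (D 0) * (D 1) + (B 0) * (B 0) * (C 0) * (C 1) * (D 1) * (D 1) + (A 1) * (A 1) * (C 0) * (C 1) * (D 0) * (D 0) + (-1:ℝ) * (A 1) * (A 1) * (C 0) * (C 0) * (D 0) * (D 1) + (-1:ℝ) * (A 1) * (A 1) * (B 0) * (B 1) * (D 0) * (D 0) + (A 1) * (A 1) * (B 0) * (B 1) * (C 0)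 * (C 0) + (A 1) * (A 1) * (B 0) * (B 0) * (D 0) * (D 1) + (-1:ℝ) * (A 1) * (A 1) * (B 0) * (B 0) * (C 0) * (C 1) + (-1:ℝ) * (A 0) * (A 1) * (C 1) * (C 1) * (D 0) * (D 0) + (A 0) * (A 1) * (C 0) * (C 0) * (D 1) * (D 1) + (A 0) * (A 1) * (B 1) * (B 1) * (D 0) * (D 0) + (-1:ℝ) * (A 0) * (A 1) * (B 1) * (B 1) * (C 0) * (C 0) + (-1:ℝ) * (A 0) * (A 1) * (B 0) * (B 0) * (D 1) * (D 1) + (A 0) * (A 1) * (B 0) * (B 0) * (C 1) * (C 1) + (A 0) * (A 0) * (C 1) * (C 1) * (D 0) * (D 1) + (-1:ℝ) * (A 0) * (A 0) * (C 0) * (C 1) * (D 1) * (D 1) + (-1:ℝ) * (A 0) * (A 0) * (B 1) * (B 1) * (D 0) * (D 1) + (A 0) * (A 0) * (B 1) * (B 1) * (C 0) * (C 1) + (A 0) * (A 0) * (B 0) * (B 1) * (D 1) * (D 1) + (-1:ℝ) * (A 0) * (A 0) * (B 0) * (B 1) * (C 1) * (C 1))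
        = ((B 0 - A 0) * (C 1 - A 1) - (B 1 - A 1) * (C 0 - A 0))
          * (((B 0 - A 0) * (D 1 - A 1) - (B 1 - A 1) * (D 0 - A 0))
          * ((C 0 - A 0) * (D 1 - A 1) - (C 1 - A 1) * (D 0 - A 0))) := by ring
    rw [za, zb, zc, zd, ze, zf] at key
    simp only [zero_mul, add_zero, zero_add] at key
    exact mul_ne_zero (cross_ne_zero A B C h1)
      (mul_ne_zero (cross_ne_zero A B D h2) (cross_ne_zero A C D h3)) key.symm
  · linear_combination ((2:ℝ) * (C 1) * (D 0) + (-2:ℝ) * (C 0) * (D 1) + (-2:ℝ) * (B 1) * (D 0) + (2:ℝ) * (B 1) * (C 0) + (2:ℝ) * (B 0) * (D 1) + (-2:ℝ) * (B 0) * (C 1)) * dA + ((-2:ℝ) * (C 1) * (D 0) + (2:ℝ) * (C 0) * (D 1) + (2:ℝ) * (A 1) * (D 0) + (-2:ℝ) * (A 1) * (C 0) + (-2:ℝ) * (A 0) * (D 1) + (2:ℝ) * (A 0) * (C 1)) * dB + ((2:ℝ) * (B 1) * (D 0) + (-2:ℝ) * (B 0) * (D 1) + (-2:ℝ) * (A 1)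 * (D 0) + (2:ℝ) * (A 1) * (B 0) + (2:ℝ) * (A 0) * (D 1) + (-2:ℝ) * (A 0) * (B 1)) * dC + ((-2:ℝ) * (B 1) * (C 0) + (2:ℝ) * (B 0) * (C 1) + (2:ℝ) * (A 1) * (C 0) + (-2:ℝ) * (A 1) * (B 0) + (-2:ℝ) * (A 0) * (C 1) + (2:ℝ) * (A 0) * (B 1)) * dD
  · simp only [conicEval, mape]; ring
  · simp only [conicEval, mape]; ring
  · simp only [conicEval, mape]; ring
  · simp only [conicEval, mape]; ring
  · simp only [conicEval, mape]; ring
  · simp only [conicEval, mape]; ring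
  · simp only [conicEval]
    rw [eA0, eA1]
    linear_combination ((-1:ℝ) * (B 1) * (C 1) * (D 0) * (D 0) + (2:ℝ) * (B 1) * (C 1) * (D 0) * (D 0) * sA + (B 1) * (C 0) * (D 0) * (D 1) + (-2:ℝ) * (B 1) * (C 0) * (D 0) * (D 1) * sA + (B 0) * (C 1) * (D 0) * (D 1) + (-2:ℝ) * (B 0) * (C 1) * (D 0) * (D 1) * sA + (-1:ℝ) * (B 0) * (C 0) * (D 1) * (D 1) + (2:ℝ) * (B 0) * (C 0) * (D 1) * (D 1) * sA + (A 1) * (C 1) * (D 0) * (D 0) + (-2:ℝ) * (A 1) * (C 1) * (D 0) * (D 0) * sA + (-1:ℝ) * (A 1) * (C 0) * (D 0) * (D 1) + (2:ℝ) * (A 1) * (C 0) * (D 0) * (D 1) * sA + (A 1) * (B 1) * (D 0) * (D 0) + (-2:ℝ) * (A 1) * (B 1) * (D 0) * (D 0) * sA + (-1:ℝ) * (A 1) * (B 1) * (C 0) * (D 0) + (2:ℝ) * (A 1) * (B 1) * (C 0) * (D 0) * sA + (-1:ℝ) * (A 1) * (B 0) * (D 0) * (D 1) + (2:ℝ) *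 (A 1) * (B 0) * (D 0) * (D 1) * sA + (-1:ℝ) * (A 1) * (B 0) * (C 1) * (D 0) + (2:ℝ) * (A 1) * (B 0) * (C 1) * (D 0) * sA + (2:ℝ) * (A 1) * (B 0) * (C 0) * (D 1) + (-4:ℝ) * (A 1) * (B 0) * (C 0) * (D 1) * sA + (-1:ℝ) * (A 1) * (A 1) * (D 0) * (D 0) + (2:ℝ) * (A 1) * (A 1) * (D 0) * (D 0) * sA + (A 1) * (A 1) * (C 0) * (D 0) + (-2:ℝ) * (A 1) * (A 1) * (C 0) * (D 0) * sA + (A 1) * (A 1) * (B 0) * (D 0) + (-2:ℝ) * (A 1) * (A 1) * (B 0) * (D 0) * sA + (-1:ℝ) * (A 1) * (A 1) * (B 0) * (C 0) + (2:ℝ) * (A 1) * (A 1) * (B 0) * (C 0) * sA + (-1:ℝ) * (A 0) * (C 1) * (D 0) * (D 1) + (2:ℝ) * (A 0) * (C 1) * (D 0) * (D 1) * sA + (A 0) * (C 0) * (D 1) * (D 1) + (-2:ℝ) * (A 0) * (C 0) * (D 1) * (D 1) * sA + (-1:ℝ) * (A 0) * (B 1) * (D 0) * (D 1) + (2:ℝ)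 * (A 0) * (B 1) * (D 0) * (D 1) * sA + (2:ℝ) * (A 0) * (B 1) * (C 1) * (D 0) + (-4:ℝ) * (A 0) * (B 1) * (C 1) * (D 0) * sA + (-1:ℝ) * (A 0) * (B 1) * (C 0) * (D 1) + (2:ℝ) * (A 0) * (B 1) * (C 0) * (D 1) * sA + (A 0) * (B 0) * (D 1) * (D 1) + (-2:ℝ) * (A 0) * (B 0) * (D 1) * (D 1) * sA + (-1:ℝ) * (A 0) * (B 0) * (C 1) * (D 1) + (2:ℝ) * (A 0) * (B 0) * (C 1) * (D 1) * sA + (2:ℝ) * (A 0) * (A 1) * (D 0) * (D 1) + (-4:ℝ) * (A 0) * (A 1) * (D 0) * (D 1) * sA + (-1:ℝ) * (A 0) * (A 1) * (C 1) * (D 0) + (2:ℝ) * (A 0) * (A 1) * (C 1) * (D 0) * sA + (-1:ℝ) * (A 0) * (A 1) * (C 0) * (D 1) + (2:ℝ) * (A 0) * (A 1) * (C 0) * (D 1) * sA + (-1:ℝ) * (A 0) * (A 1) * (B 1) * (D 0) + (2:ℝ) * (A 0) * (A 1) * (B 1) * (D 0) * sA + (A 0) * (A 1) * (B 1) * (C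 0) + (-2:ℝ) * (A 0) * (A 1) * (B 1) * (C 0) * sA + (-1:ℝ) * (A 0) * (A 1) * (B 0) * (D 1) + (2:ℝ) * (A 0) * (A 1) * (B 0) * (D 1) * sA + (A 0) * (A 1) * (B 0) * (C 1) + (-2:ℝ) * (A 0) * (A 1) * (B 0) * (C 1) * sA + (-1:ℝ) * (A 0) * (A 0) * (D 1) * (D 1) + (2:ℝ) * (A 0) * (A 0) * (D 1) * (D 1) * sA + (A 0) * (A 0) * (C 1) * (D 1) + (-2:ℝ) * (A 0) * (A 0) * (C 1) * (D 1) * sA + (A 0) * (A 0) * (B 1) * (D 1) + (-2:ℝ) * (A 0) * (A 0) * (B 1) * (D 1) * sA + (-1:ℝ) * (A 0) * (A 0) * (B 1) * (C 1) + (2:ℝ) * (A 0) * (A 0) * (B 1) * (C 1) * sA) * hlA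
  · simp only [conicEval]
    rw [eB0, eB1]
    linear_combination ((-1:ℝ) * (B 1) * (B 1) * (C 0) * (D 0) + (2:ℝ) * (B 1) * (B 1) * (C 0) * (D 0) * sB + (B 0) * (B 1) * (C 1) * (D 0) + (-2:ℝ) * (B 0) * (B 1) * (C 1) * (D 0) * sB + (B 0) * (B 1) * (C 0) * (D 1) + (-2:ℝ) * (B 0) * (B 1) * (C 0) * (D 1) * sB + (-1:ℝ) * (B 0) * (B 0) * (C 1) * (D 1) + (2:ℝ) * (B 0) * (B 0) * (C 1) * (D 1) * sB + (2:ℝ) * (A 1) * (B 1) * (C 0) * (D 0) + (-4:ℝ) * (A 1) * (B 1) * (C 0) * (D 0) * sB + (-1:ℝ) * (A 1) * (B 0) * (C 1) * (D 0) + (2:ℝ) * (A 1) * (B 0) * (C 1) * (D 0) * sB + (-1:ℝ) * (A 1) * (B 0) * (C 0) * (D 1) + (2:ℝ) * (A 1) * (B 0) * (C 0) * (D 1) * sB + (-1:ℝ) * (A 1) * (B 0) * (B 1) * (D 0) + (2:ℝ) * (A 1) * (B 0) * (B 1) * (D 0) * sB + (-1:ℝ) * (A 1) * (B 0) * (B 1)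 * (C 0) + (2:ℝ) * (A 1) * (B 0) * (B 1) * (C 0) * sB + (A 1) * (B 0) * (B 0) * (D 1) + (-2:ℝ) * (A 1) * (B 0) * (B 0) * (D 1) * sB + (A 1) * (B 0) * (B 0) * (C 1) + (-2:ℝ) * (A 1) * (B 0) * (B 0) * (C 1) * sB + (-1:ℝ) * (A 1) * (A 1) * (C 0) * (D 0) + (2:ℝ) * (A 1) * (A 1) * (C 0) * (D 0) * sB + (A 1) * (A 1) * (B 0) * (D 0) + (-2:ℝ) * (A 1) * (A 1) * (B 0) * (D 0) * sB + (A 1) * (A 1) * (B 0) * (C 0) + (-2:ℝ) * (A 1) * (A 1) * (B 0) * (C 0) * sB + (-1:ℝ) * (A 1) * (A 1) * (B 0) * (B 0) + (2:ℝ) * (A 1) * (A 1) * (B 0) * (B 0) * sB + (-1:ℝ) * (A 0) * (B 1) * (C 1) * (D 0) + (2:ℝ) * (A 0) * (B 1) * (C 1) * (D 0) * sB + (-1:ℝ) * (A 0) * (B 1) * (C 0) * (D 1) + (2:ℝ) * (A 0) * (B 1) * (C 0) * (D 1) * sB + (A 0) * (B 1) * (B 1) * (D 0) + (-2:ℝ)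 * (A 0) * (B 1) * (B 1) * (D 0) * sB + (A 0) * (B 1) * (B 1) * (C 0) + (-2:ℝ) * (A 0) * (B 1) * (B 1) * (C 0) * sB + (2:ℝ) * (A 0) * (B 0) * (C 1) * (D 1) + (-4:ℝ) * (A 0) * (B 0) * (C 1) * (D 1) * sB + (-1:ℝ) * (A 0) * (B 0) * (B 1) * (D 1) + (2:ℝ) * (A 0) * (B 0) * (B 1) * (D 1) * sB + (-1:ℝ) * (A 0) * (B 0) * (B 1) * (C 1) + (2:ℝ) * (A 0) * (B 0) * (B 1) * (C 1) * sB + (A 0) * (A 1) * (C 1) * (D 0) + (-2:ℝ) * (A 0) * (A 1) * (C 1) * (D 0) * sB + (A 0) * (A 1) * (C 0) * (D 1) + (-2:ℝ) * (A 0) * (A 1) * (C 0) * (D 1) * sB + (-1:ℝ) * (A 0) * (A 1) * (B 1) * (D 0) + (2:ℝ) * (A 0) * (A 1) * (B 1) * (D 0) * sB + (-1:ℝ) * (A 0) * (A 1) * (B 1) * (C 0) + (2:ℝ) * (A 0) * (A 1) * (B 1) * (C 0) * sB + (-1:ℝ) * (A 0) * (A 1) * (B 0) * (D 1) + (2:ℝ)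 * (A 0) * (A 1) * (B 0) * (D 1) * sB + (-1:ℝ) * (A 0) * (A 1) * (B 0) * (C 1) + (2:ℝ) * (A 0) * (A 1) * (B 0) * (C 1) * sB + (2:ℝ) * (A 0) * (A 1) * (B 0) * (B 1) + (-4:ℝ) * (A 0) * (A 1) * (B 0) * (B 1) * sB + (-1:ℝ) * (A 0) * (A 0) * (C 1) * (D 1) + (2:ℝ) * (A 0) * (A 0) * (C 1) * (D 1) * sB + (A 0) * (A 0) * (B 1) * (D 1) + (-2:ℝ) * (A 0) * (A 0) * (B 1) * (D 1) * sB + (A 0) * (A 0) * (B 1) * (C 1) + (-2:ℝ) * (A 0) * (A 0) * (B 1) * (C 1) * sB + (-1:ℝ) * (A 0) * (A 0) * (B 1) * (B 1) + (2:ℝ) * (A 0) * (A 0) * (B 1) * (B 1) * sB) * hlB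
  · simp only [conicEval]
    rw [eC0, eC1]
    linear_combination ((-1:ℝ) * (B 1) * (C 0) * (C 1) * (D 0) + (2:ℝ) * (B 1) * (C 0) * (C 1) * (D 0) * sC + (B 1) * (C 0) * (C 0) * (D 1) + (-2:ℝ) * (B 1) * (C 0) * (C 0) * (D 1) * sC + (B 0) * (C 1) * (C 1) * (D 0) + (-2:ℝ) * (B 0) * (C 1) * (C 1) * (D 0) * sC + (-1:ℝ) * (B 0) * (C 0) * (C 1) * (D 1) + (2:ℝ) * (B 0) * (C 0) * (C 1) * (D 1) * sC + (A 1) * (C 0) * (C 1) * (D 0) + (-2:ℝ) * (A 1) * (C 0) * (C 1) * (D 0) * sC + (-1:ℝ) * (A 1) * (C 0) * (C 0) * (D 1) + (2:ℝ) * (A 1) * (C 0) * (C 0) * (D 1) * sC + (A 1) * (B 1) * (C 0) * (D 0) + (-2:ℝ) * (A 1) * (B 1) * (C 0) * (D 0) * sC + (-1:ℝ) * (A 1) * (B 1) * (C 0) * (C 0) + (2:ℝ) * (A 1) * (B 1) * (C 0) * (C 0) * sC + (-2:ℝ) * (A 1) * (B 0) * (C 1) * (D 0) + (4:ℝ) *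 (A 1) * (B 0) * (C 1) * (D 0) * sC + (A 1) * (B 0) * (C 0) * (D 1) + (-2:ℝ) * (A 1) * (B 0) * (C 0) * (D 1) * sC + (A 1) * (B 0) * (C 0) * (C 1) + (-2:ℝ) * (A 1) * (B 0) * (C 0) * (C 1) * sC + (-1:ℝ) * (A 1) * (A 1) * (C 0) * (D 0) + (2:ℝ) * (A 1) * (A 1) * (C 0) * (D 0) * sC + (A 1) * (A 1) * (C 0) * (C 0) + (-2:ℝ) * (A 1) * (A 1) * (C 0) * (C 0) * sC + (A 1) * (A 1) * (B 0) * (D 0) + (-2:ℝ) * (A 1) * (A 1) * (B 0) * (D 0) * sC + (-1:ℝ) * (A 1) * (A 1) * (B 0) * (C 0) + (2:ℝ) * (A 1) * (A 1) * (B 0) * (C 0) * sC + (-1:ℝ) * (A 0) * (C 1) * (C 1) * (D 0) + (2:ℝ) * (A 0) * (C 1) * (C 1) * (D 0) * sC + (A 0) * (C 0) * (C 1) * (D 1) + (-2:ℝ) * (A 0) * (C 0) * (C 1) * (D 1) * sC + (A 0) * (B 1) * (C 1) * (D 0) + (-2:ℝ) * (A 0) * (B 1) * (C 1) * (D 0)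 * sC + (-2:ℝ) * (A 0) * (B 1) * (C 0) * (D 1) + (4:ℝ) * (A 0) * (B 1) * (C 0) * (D 1) * sC + (A 0) * (B 1) * (C 0) * (C 1) + (-2:ℝ) * (A 0) * (B 1) * (C 0) * (C 1) * sC + (A 0) * (B 0) * (C 1) * (D 1) + (-2:ℝ) * (A 0) * (B 0) * (C 1) * (D 1) * sC + (-1:ℝ) * (A 0) * (B 0) * (C 1) * (C 1) + (2:ℝ) * (A 0) * (B 0) * (C 1) * (C 1) * sC + (A 0) * (A 1) * (C 1) * (D 0) + (-2:ℝ) * (A 0) * (A 1) * (C 1) * (D 0) * sC + (A 0) * (A 1) * (C 0) * (D 1) + (-2:ℝ) * (A 0) * (A 1) * (C 0) * (D 1) * sC + (-2:ℝ) * (A 0) * (A 1) * (C 0) * (C 1) + (4:ℝ) * (A 0) * (A 1) * (C 0) * (C 1) * sC + (-1:ℝ) * (A 0) * (A 1) * (B 1) * (D 0) + (2:ℝ) * (A 0) * (A 1) * (B 1) * (D 0) * sC + (A 0) * (A 1) * (B 1) * (C 0) + (-2:ℝ) * (A 0) * (A 1) * (B 1) * (C 0) * sC + (-1:ℝ) *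 (A 0) * (A 1) * (B 0) * (D 1) + (2:ℝ) * (A 0) * (A 1) * (B 0) * (D 1) * sC + (A 0) * (A 1) * (B 0) * (C 1) + (-2:ℝ) * (A 0) * (A 1) * (B 0) * (C 1) * sC + (-1:ℝ) * (A 0) * (A 0) * (C 1) * (D 1) + (2:ℝ) * (A 0) * (A 0) * (C 1) * (D 1) * sC + (A 0) * (A 0) * (C 1) * (C 1) + (-2:ℝ) * (A 0) * (A 0) * (C 1) * (C 1) * sC + (A 0) * (A 0) * (B 1) * (D 1) + (-2:ℝ) * (A 0) * (A 0) * (B 1) * (D 1) * sC + (-1:ℝ) * (A 0) * (A 0) * (B 1) * (C 1) + (2:ℝ) * (A 0) * (A 0) * (B 1) * (C 1) * sC) * hlC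
end
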